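/- arXiv:2112.13933 — 7 statements merged into one kernel-verified Lean document; each statement's English description precedes it below -/
import Mathlib

section
/- Let μ be a finite Borel measure on the unit circle 𝕌 and let f ∈ C_c^∞(𝔻∖{0}) be real-valued. Then ∫_𝔻 f(z) · Re(L_μ′(z)) dλ(z) = ∫_𝕌 [ ∫_𝔻 f(z) · Re( (w+z)/(w−z) + 2wz/(w−z)² ) dλ(z) ] dμ(w). (In the notation of the paper, the inner integral equals 2π·((H*f)(w) − ∂_n H (H*f)(w)), so this is the boundary-localization identity ∫_𝔻 f Re(L_μ′) dλ = 2π ∫_𝕌 (f* − ∂_n H f*) dμ.) -/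
noncomputable section

open MeasureTheory

/-- The open unit disk in `ℂ`. -/
def unitDisk : Set ℂ := Metric.ball 0 1

/-- The unit circle in `ℂ`. -/
def unitCircle : Set ℂ := Metric.sphere 0 1

/-- The Loewner vector field `L_μ(z) = −∫_𝕌 z (z+w)/(z−w) dμ(w)`. -/
def Lmu (μ : Measure ℂ) (z : ℂ) : ℂ :=
  -∫ w, z * ((z + w) / (z - w)) ∂μ

lemma ae_norm_one (μ : Measure ℂ) (hμ : μ unitCircleᶜ = 0) : ∀ᵐ w ∂μ, ‖w‖ = 1 := by
  rw [ae_iff]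
  convert hμ using 2
  ext w
  simp [unitCircle, mem_sphere_zero_iff_norm]

lemma K_bound {w z : ℂ} (hw : ‖w‖ = 1) {r : ℝ} (hr : r < 1) (hz : ‖z‖ ≤ r) :
    ‖(w + z) / (w - z) + 2 * w * z / (w - z) ^ 2‖ ≤ 2 / (1 - r) + 2 / (1 - r) ^ 2 := by
  have hr0 : (0:ℝ) < 1 - r := by linarith
  have hd : 1 - r ≤ ‖w - z‖ := by
    calc 1 - r ≤ ‖w‖ - ‖z‖ := by rw [hw]; linarith
    _ ≤ ‖w - z‖ := norm_sub_norm_le w z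
  have h1 : ‖(w + z) / (w - z)‖ ≤ 2 / (1 - r) := by
    rw [norm_div]
    have : ‖w + z‖ ≤ 2 := by
      calc ‖w + z‖ ≤ ‖w‖ + ‖z‖ := norm_add_le _ _
      _ ≤ 2 := by rw [hw]; linarith
    gcongr
  have h2 : ‖2 * w * z / (w - z) ^ 2‖ ≤ 2 / (1 - r) ^ 2 := by
    rw [norm_div, norm_pow]
    have : ‖2 * w * z‖ ≤ 2 := by
      rw [norm_mul, norm_mul, hw]
      simp only [Complex.norm_ofNat]
      nlinarith [norm_nonneg z]
    gcongr
  calc ‖(w + z) / (w - z) + 2 * w * z / (w - z) ^ 2‖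
      ≤ ‖(w + z) / (w - z)‖ + ‖2 * w * z / (w - z) ^ 2‖ := norm_add_le _ _
  _ ≤ 2 / (1 - r) + 2 / (1 - r) ^ 2 := by linarith

set_option maxHeartbeats 1000000 in
lemma key (μ : Measure ℂ) [IsFiniteMeasure μ] (hμ : μ unitCircleᶜ = 0)
    {z : ℂ} (hz : ‖z‖ < 1) :
    Integrable (fun w => (w + z) / (w - z) + 2 * w * z / (w - z) ^ 2) μ ∧
      deriv (Lmu μ) z = ∫ w, ((w + z) / (w - z) + 2 * w * z / (w - z) ^ 2) ∂μ := by
  have hae : ∀ᵐ w ∂μ, ‖w‖ = 1 := ae_norm_one μ hμ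
  set ε : ℝ := (1 - ‖z‖) / 2 with hεdef
  have hε0 : 0 < ε := by
    have := norm_nonneg z
    simp only [hεdef]; linarith
  have hzε : ‖z‖ + ε ≤ 1 - ε := by simp only [hεdef]; linarith
  -- bound on ‖x‖ for x in the ball
  have hxball : ∀ x ∈ Metric.ball z ε, ‖x‖ ≤ 1 - ε := by
    intro x hx
    have : ‖x - z‖ < ε := mem_ball_iff_norm.mp hx
    have : ‖x‖ ≤ ‖x - z‖ + ‖z‖ := by
      calc ‖x‖ = ‖x - z + z‖ := by ring_nf
      _ ≤ ‖x - z‖ + ‖z‖ := norm_add_le _ _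
    linarith
  have hsubne : ∀ (x w : ℂ), ‖x‖ ≤ 1 - ε → ‖w‖ = 1 → ε ≤ ‖x - w‖ ∧ x - w ≠ 0 := by
    intro x w hx hw
    have h1 : ε ≤ ‖x - w‖ := by
      calc ε ≤ ‖w‖ - ‖x‖ := by rw [hw]; linarith
      _ ≤ ‖w - x‖ := norm_sub_norm_le w x
      _ = ‖x - w‖ := norm_sub_rev w x
    exact ⟨h1, by intro h; rw [h] at h1; simp at h1; linarith⟩
  -- the difference quotient data
  set F' : ℂ → ℂ → ℂ := fun x w =>
    ((1 * (x + w) + x * 1) * (x - w) - x * (x + w) * 1) / (x - w) ^ 2 with hF'def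
  have hF_meas : ∀ᶠ x in nhds z, AEStronglyMeasurable (fun w => x * ((x + w) / (x - w))) μ := by
    filter_upwards with x
    exact (measurable_const.mul ((measurable_const.add measurable_id).div
      (measurable_const.sub measurable_id))).aestronglyMeasurable
  have hF_int : Integrable (fun w => z * ((z + w) / (z - w))) μ := by
    refine ⟨(measurable_const.mul ((measurable_const.add measurable_id).div
      (measurable_const.sub measurable_id))).aestronglyMeasurable, ?_⟩
    apply HasFiniteIntegral.of_bounded (C := 2 / ε)
    filter_upwards [hae] with w hw
    have hzw := (hsubne z w (by linarith) hw).1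
    rw [norm_mul, norm_div]
    have h1 : ‖z + w‖ ≤ 2 := by
      calc ‖z + w‖ ≤ ‖z‖ + ‖w‖ := norm_add_le _ _
      _ ≤ 2 := by rw [hw]; linarith
    calc ‖z‖ * (‖z + w‖ / ‖z - w‖) ≤ 1 * (2 / ε) := by
          apply mul_le_mul (le_of_lt hz) _ (by positivity) zero_le_one
          gcongr
    _ = 2 / ε := one_mul _
  have hF'_meas : AEStronglyMeasurable (F' z) μ := by
    have hm : Measurable (fun w : ℂ =>
        ((1 * (z + w) + z * 1) * (z - w) - z * (z + w) * 1) / (z - w) ^ 2) := by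
      fun_prop
    exact hm.aestronglyMeasurable
  have h_bound : ∀ᵐ w ∂μ, ∀ x ∈ Metric.ball z ε, ‖F' x w‖ ≤ 8 / ε ^ 2 := by
    filter_upwards [hae] with w hw x hx
    have hx1 : ‖x‖ ≤ 1 - ε := hxball x hx
    obtain ⟨hd, _⟩ := hsubne x w hx1 hw
    have hx1' : ‖x‖ ≤ 1 := by linarith
    have hxw : ‖x + w‖ ≤ 2 := by
      calc ‖x + w‖ ≤ ‖x‖ + ‖w‖ := norm_add_le _ _
      _ ≤ 2 := by rw [hw]; linarith
    have hxw2 : ‖x - w‖ ≤ 2 := by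
      calc ‖x - w‖ ≤ ‖x‖ + ‖w‖ := norm_sub_le _ _
      _ ≤ 2 := by rw [hw]; linarith
    have hnum : ‖(1 * (x + w) + x * 1) * (x - w) - x * (x + w) * 1‖ ≤ 8 := by
      have e1 : ‖(1:ℂ) * (x + w) + x * 1‖ ≤ 3 := by
        calc ‖(1:ℂ) * (x + w) + x * 1‖ ≤ ‖(1:ℂ) * (x + w)‖ + ‖x * 1‖ := norm_add_le _ _
        _ = ‖x + w‖ + ‖x‖ := by simp
        _ ≤ 3 := by linarith
      calc ‖(1 * (x + w) + x * 1) * (x - w) - x * (x + w) * 1‖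
          ≤ ‖(1 * (x + w) + x * 1) * (x - w)‖ + ‖x * (x + w) * 1‖ := norm_sub_le _ _
      _ = ‖(1:ℂ) * (x + w) + x * 1‖ * ‖x - w‖ + ‖x‖ * ‖x + w‖ := by
          rw [norm_mul]; simp [norm_mul]
      _ ≤ 3 * 2 + 1 * 2 := by
          have := mul_le_mul e1 hxw2 (norm_nonneg _) (by norm_num)
          have := mul_le_mul hx1' hxw (norm_nonneg _) (by norm_num)
          linarith
      _ = 8 := by norm_num
    rw [hF'def]
    simp only [norm_div, norm_pow]
    gcongr
  have bound_int : Integrable (fun _ : ℂ => (8:ℝ) / ε ^ 2) μ := integrable_const _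
  have h_diff : ∀ᵐ w ∂μ, ∀ x ∈ Metric.ball z ε,
      HasDerivAt (fun y => y * ((y + w) / (y - w))) (F' x w) x := by
    filter_upwards [hae] with w hw x hx
    obtain ⟨_, hne⟩ := hsubne x w (hxball x hx) hw
    have h1 : HasDerivAt (fun y : ℂ => y * (y + w)) (1 * (x + w) + x * 1) x :=
      (hasDerivAt_id x).mul ((hasDerivAt_id x).add_const w)
    have h2 : HasDerivAt (fun y : ℂ => y - w) 1 x := (hasDerivAt_id x).sub_const w
    have h3 := h1.div h2 hne
    have heq : (fun y => y * ((y + w) / (y - w))) = ((fun y : ℂ => y * (y + w)) / fun y => y - w) := by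
      funext y; simp only [Pi.div_apply, mul_div_assoc]
    rw [heq]; exact h3
  obtain ⟨hint', hderiv⟩ := hasDerivAt_integral_of_dominated_loc_of_deriv_le (Metric.ball_mem_nhds z hε0) hF_meas
    hF_int hF'_meas h_bound bound_int h_diff
  have hL : HasDerivAt (Lmu μ) (-∫ w, F' z w ∂μ) z := by
    unfold Lmu
    exact hderiv.neg
  have hcongr : ∀ᵐ w ∂μ, -F' z w = (w + z) / (w - z) + 2 * w * z / (w - z) ^ 2 := by
    filter_upwards [hae] with w hw
    obtain ⟨_, hne⟩ := hsubne z w (by linarith) hw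
    have hne' : w - z ≠ 0 := sub_ne_zero.mpr (Ne.symm (sub_ne_zero.mp hne))
    rw [hF'def]
    field_simp
    ring
  constructor
  · exact hint'.neg.congr hcongr
  · rw [hL.deriv, ← integral_neg]
    exact integral_congr_ae hcongr

/-- Boundary localization identity
`∫_𝔻 f Re(L_μ′) dλ = ∫_𝕌 [∫_𝔻 f(z) Re((w+z)/(w−z) + 2wz/(w−z)²) dλ(z)] dμ(w)`,
i.e. `∫_𝔻 f Re(L_μ′) dλ = 2π ∫_𝕌 (f* − ∂_n H f*) dμ`. -/
theorem statement1 (μ : Measure ℂ) [IsFiniteMeasure μ] (hμ : μ unitCircleᶜ = 0)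
    (f : ℂ → ℝ) (hf : ContDiff ℝ (⊤ : ℕ∞) f) (hfc : HasCompactSupport f)
    (hsupp : tsupport f ⊆ unitDisk \ {0}) :
    ∫ z in unitDisk, f z * (deriv (Lmu μ) z).re =
      ∫ w, (∫ z in unitDisk,
        f z * ((w + z) / (w - z) + 2 * w * z / (w - z) ^ 2).re) ∂μ := by
  -- radius of the support
  obtain ⟨r, hr0, hr1, hsub⟩ : ∃ r : ℝ, 0 ≤ r ∧ r < 1 ∧
      tsupport f ⊆ Metric.closedBall 0 r := by
    rcases Set.eq_empty_or_nonempty (tsupport f) with he | hne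
    · exact ⟨0, le_refl 0, one_pos, by rw [he]; exact Set.empty_subset _⟩
    · obtain ⟨z0, hz0, hmax⟩ := hfc.exists_isMaxOn hne continuous_norm.continuousOn
      refine ⟨‖z0‖, norm_nonneg _, ?_, ?_⟩
      · have := hsupp hz0
        exact mem_ball_zero_iff.mp this.1
      · intro y hy
        exact mem_closedBall_zero_iff.mpr (hmax hy)
  obtain ⟨C, hC⟩ := hfc.exists_bound_of_continuous hf.continuous
  have hC0 : 0 ≤ C := le_trans (norm_nonneg _) (hC 0)
  have hae : ∀ᵐ w ∂μ, ‖w‖ = 1 := ae_norm_one μ hμ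
  -- step 1: pointwise identity on the disk
  have hpt : ∀ z ∈ unitDisk, f z * (deriv (Lmu μ) z).re =
      ∫ w, f z * ((w + z) / (w - z) + 2 * w * z / (w - z) ^ 2).re ∂μ := by
    intro z hz
    have hz1 : ‖z‖ < 1 := mem_ball_zero_iff.mp hz
    obtain ⟨hint, hder⟩ := key μ hμ hz1
    rw [hder]
    rw [integral_const_mul]
    congr 1
    exact (integral_re hint).symm
  -- finiteness instances
  haveI : IsFiniteMeasure (volume.restrict unitDisk) := by
    constructor
    rw [Measure.restrict_apply_univ]
    exact measure_ball_lt_top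
  -- joint measurability
  have hmeas : AEStronglyMeasurable
      (fun p : ℂ × ℂ => f p.1 *
        ((p.2 + p.1) / (p.2 - p.1) + 2 * p.2 * p.1 / (p.2 - p.1) ^ 2).re)
      ((volume.restrict unitDisk).prod μ) := by
    apply Measurable.aestronglyMeasurable
    apply Measurable.mul
    · exact hf.continuous.measurable.comp measurable_fst
    · apply Complex.measurable_re.comp
      apply Measurable.add
      · exact (measurable_snd.add measurable_fst).div (measurable_snd.sub measurable_fst)
      · exact ((measurable_const.mul measurable_snd).mul measurable_fst).div
          ((measurable_snd.sub measurable_fst).pow_const 2)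
  -- a.e. the second coordinate is on the circle
  have hae2 : ∀ᵐ p ∂((volume.restrict unitDisk).prod μ), ‖p.2‖ = 1 := by
    rw [ae_iff]
    have hset : {p : ℂ × ℂ | ¬ ‖p.2‖ = 1} = Set.univ ×ˢ {w : ℂ | ¬ ‖w‖ = 1} := by
      ext p; simp
    rw [hset, Measure.prod_prod]
    have : μ {w : ℂ | ¬ ‖w‖ = 1} = 0 := ae_iff.mp hae
    rw [this, mul_zero]
  -- integrability on the product
  have hInt : Integrable
      (Function.uncurry fun z w : ℂ => f z *
        ((w + z) / (w - z) + 2 * w * z / (w - z) ^ 2).re)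
      ((volume.restrict unitDisk).prod μ) := by
    refine ⟨hmeas, ?_⟩
    apply HasFiniteIntegral.of_bounded (C := C * (2 / (1 - r) + 2 / (1 - r) ^ 2))
    filter_upwards [hae2] with p hw
    obtain ⟨z, w⟩ := p
    simp only [Function.uncurry_apply_pair]
    simp only at hw
    by_cases hzs : z ∈ tsupport f
    · have hzr : ‖z‖ ≤ r := mem_closedBall_zero_iff.mp (hsub hzs)
      rw [norm_mul]
      have hK := K_bound hw hr1 hzr
      have hre : ‖((w + z) / (w - z) + 2 * w * z / (w - z) ^ 2).re‖
          ≤ ‖(w + z) / (w - z) + 2 * w * z / (w - z) ^ 2‖ := by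
        rw [Real.norm_eq_abs]
        exact Complex.abs_re_le_norm _
      exact mul_le_mul (hC z) (le_trans hre hK) (norm_nonneg _) hC0
    · have : f z = 0 := image_eq_zero_of_notMem_tsupport hzs
      rw [this, zero_mul, norm_zero]
      have h0 : (0:ℝ) < 1 - r := by linarith
      positivity
  have h1 : (∫ z in unitDisk, f z * (deriv (Lmu μ) z).re) =
      ∫ z in unitDisk, ∫ w, f z *
        ((w + z) / (w - z) + 2 * w * z / (w - z) ^ 2).re ∂μ :=
    setIntegral_congr_fun measurableSet_ball hpt
  have h2 := integral_integral_swap hInt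
  rw [h1]
  exact h2
end
end

section
/- Let f ∈ C_c^∞(𝔻) be real-valued with support contained in {z : |z| ≤ r₀} for some r₀ < 1. Define u(ζ) = −(1/2π) ∫_𝔻 f(z) · Re( (ζ·conj(z) + 1)/(ζ·conj(z) − 1) ) dλ(z) for |ζ| < 1/r₀. Then u is harmonic on {|ζ| < 1/r₀}; for every w ∈ 𝕌 one has u(w) = (H*f)(w); and for every w ∈ 𝕌 the radial derivative satisfies (d/dr)|_{r=1} u(rw) = (1/2π) ∫_𝔻 f(z) · Re( 2wz/(w−z)² ) dλ(z). (Thus the inward normal derivative of the harmonic extension of H*f at w equals −(1/2π)∫_𝔻 f(z) Re(2wz/(w−z)²) dλ(z).) -/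
noncomputable section

open MeasureTheory

/-- `(H*f)(w) = (1/2π) ∫_𝔻 Re((w+z)/(w−z)) f(z) dλ(z)`, the adjoint of the Poisson operator. -/
def Hstar (f : ℂ → ℝ) (w : ℂ) : ℝ :=
  (1 / (2 * Real.pi)) * ∫ z in unitDisk, ((w + z) / (w - z)).re * f z

/-- A function is harmonic on a set if it is `C²` there and its Laplacian vanishes. -/
def HarmonicOnSet (u : ℂ → ℝ) (s : Set ℂ) : Prop :=
  ContDiffOn ℝ 2 u s ∧ ∀ z ∈ s,
    fderiv ℝ (fun x => fderiv ℝ u x 1) z 1 +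
      fderiv ℝ (fun x => fderiv ℝ u x Complex.I) z Complex.I = 0

/-- The function `u(ζ) = −(1/2π) ∫_𝔻 f(z) Re((ζ conj z + 1)/(ζ conj z − 1)) dλ(z)`. -/
def uExt (f : ℂ → ℝ) (ζ : ℂ) : ℝ :=
  -(1 / (2 * Real.pi)) * ∫ z in unitDisk,
    f z * ((ζ * (starRingEnd ℂ) z + 1) / (ζ * (starRingEnd ℂ) z - 1)).re

/-! ### Auxiliary lemmas -/

namespace Statement2Aux

open Metric Complex

/-- The holomorphic function whose real part (up to constant) is `uExt f`. -/
def gfun (f : ℂ → ℝ) (ζ : ℂ) : ℂ :=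
  ∫ z in unitDisk, (f z : ℂ) * ((ζ * (starRingEnd ℂ) z + 1) / (ζ * (starRingEnd ℂ) z - 1))

lemma key1 {w z : ℂ} (hw : ‖w‖ = 1) (hz : ‖z‖ < 1) :
    ((w * (starRingEnd ℂ) z + 1) / (w * (starRingEnd ℂ) z - 1)).re
      = -(((w + z) / (w - z)).re) := by
  have hww : w * (starRingEnd ℂ) w = 1 := by
    rw [Complex.mul_conj]; norm_cast; rw [Complex.normSq_eq_norm_sq, hw]; norm_num
  have h1 : w * (starRingEnd ℂ) z - 1 ≠ 0 := by
    intro h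
    have : ‖w * (starRingEnd ℂ) z‖ = 1 := by
      have : w * (starRingEnd ℂ) z = 1 := by linear_combination h
      simp [this]
    rw [norm_mul, Complex.norm_conj, hw, one_mul] at this
    linarith
  have h2 : w - z ≠ 0 := by
    intro h
    have : w = z := by linear_combination h
    rw [this] at hw; linarith
  have h2' : (starRingEnd ℂ) w - (starRingEnd ℂ) z ≠ 0 := by
    intro h; apply h2
    have := congrArg (starRingEnd ℂ) h
    simpa using this
  have key : (w * (starRingEnd ℂ) z + 1) / (w * (starRingEnd ℂ) z - 1)
      = (starRingEnd ℂ) (-((w + z) / (w - z))) := by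
    rw [map_neg, map_div₀, map_add, map_sub, ← neg_div]
    rw [div_eq_div_iff h1 (by simpa using h2')]
    linear_combination (2 * (starRingEnd ℂ) z) * hww
  rw [key, Complex.conj_re, Complex.neg_re]

lemma key2 {w z : ℂ} (hw : ‖w‖ = 1) (hz : ‖z‖ < 1) :
    (2 * w * (starRingEnd ℂ) z / (w * (starRingEnd ℂ) z - 1) ^ 2).re
      = (2 * w * z / (w - z) ^ 2).re := by
  have hww : w * (starRingEnd ℂ) w = 1 := by
    rw [Complex.mul_conj]; norm_cast; rw [Complex.normSq_eq_norm_sq, hw]; norm_num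
  have h1 : w * (starRingEnd ℂ) z - 1 ≠ 0 := by
    intro h
    have : ‖w * (starRingEnd ℂ) z‖ = 1 := by
      have : w * (starRingEnd ℂ) z = 1 := by linear_combination h
      simp [this]
    rw [norm_mul, Complex.norm_conj, hw, one_mul] at this
    linarith
  have h2 : w - z ≠ 0 := by
    intro h
    have : w = z := by linear_combination h
    rw [this] at hw; linarith
  have h2' : (starRingEnd ℂ) w - (starRingEnd ℂ) z ≠ 0 := by
    intro h; apply h2
    have := congrArg (starRingEnd ℂ) h
    simpa using this
  have key : 2 * w * (starRingEnd ℂ) z / (w * (starRingEnd ℂ) z - 1) ^ 2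
      = (starRingEnd ℂ) (2 * w * z / (w - z) ^ 2) := by
    rw [map_div₀]
    rw [div_eq_div_iff (pow_ne_zero 2 h1) (by simpa using pow_ne_zero 2 h2')]
    push_cast [map_mul, map_sub, map_pow, map_ofNat]
    linear_combination (2 * (starRingEnd ℂ) w * (starRingEnd ℂ) z
      - 2 * w * ((starRingEnd ℂ) z)^3) * hww
  rw [key, Complex.conj_re]

lemma supp_bound {f : ℂ → ℝ} {r₀ : ℝ} (hsupp : tsupport f ⊆ {z : ℂ | ‖z‖ ≤ r₀})
    {z : ℂ} (hz : f z ≠ 0) : ‖z‖ ≤ r₀ :=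
  hsupp (subset_tsupport f (by simpa [Function.mem_support] using hz))

lemma meas_ker {f : ℂ → ℝ} (hf : Continuous f) (ζ : ℂ) :
    AEStronglyMeasurable
      (fun z => (f z : ℂ) * ((ζ * (starRingEnd ℂ) z + 1) / (ζ * (starRingEnd ℂ) z - 1)))
      (volume.restrict unitDisk) := by
  have m1 : Measurable fun z : ℂ => ζ * (starRingEnd ℂ) z + 1 :=
    (measurable_const.mul Complex.continuous_conj.measurable).add measurable_const
  have m2 : Measurable fun z : ℂ => ζ * (starRingEnd ℂ) z - 1 :=
    (measurable_const.mul Complex.continuous_conj.measurable).sub measurable_const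
  exact ((Complex.measurable_ofReal.comp hf.measurable).mul (m1.div m2)).aestronglyMeasurable

lemma meas_ker' {f : ℂ → ℝ} (hf : Continuous f) (ζ : ℂ) :
    AEStronglyMeasurable
      (fun z => (f z : ℂ) * (-2 * (starRingEnd ℂ) z / (ζ * (starRingEnd ℂ) z - 1) ^ 2))
      (volume.restrict unitDisk) := by
  have m1 : Measurable fun z : ℂ => -2 * (starRingEnd ℂ) z :=
    measurable_const.mul Complex.continuous_conj.measurable
  have m2 : Measurable fun z : ℂ => (ζ * (starRingEnd ℂ) z - 1) ^ 2 :=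
    ((measurable_const.mul Complex.continuous_conj.measurable).sub measurable_const).pow_const 2
  exact ((Complex.measurable_ofReal.comp hf.measurable).mul (m1.div m2)).aestronglyMeasurable

lemma hden_lb {ζ z : ℂ} {R r₀ : ℝ} (hζ : ‖ζ‖ ≤ R) (hz : ‖z‖ ≤ r₀)
    (hr₀ : 0 ≤ r₀) : 1 - R * r₀ ≤ ‖ζ * (starRingEnd ℂ) z - 1‖ := by
  have h1 : ‖ζ * (starRingEnd ℂ) z‖ ≤ R * r₀ := by
    rw [norm_mul, Complex.norm_conj]
    exact mul_le_mul hζ hz (norm_nonneg z) ((norm_nonneg ζ).trans hζ)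
  calc 1 - R * r₀ ≤ 1 - ‖ζ * (starRingEnd ℂ) z‖ := by linarith
    _ = ‖(1 : ℂ)‖ - ‖ζ * (starRingEnd ℂ) z‖ := by simp
    _ ≤ ‖(1 : ℂ) - ζ * (starRingEnd ℂ) z‖ := norm_sub_norm_le _ _
    _ = ‖ζ * (starRingEnd ℂ) z - 1‖ := norm_sub_rev _ _
    _ = ‖ζ * (starRingEnd ℂ) z - 1‖ := rfl

lemma integrable_f_disk {f : ℂ → ℝ} (hf : Continuous f) (hfc : HasCompactSupport f) :
    Integrable f (volume.restrict unitDisk) :=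
  (hf.integrable_of_hasCompactSupport hfc).restrict

lemma integrable_ker {f : ℂ → ℝ} (hf : Continuous f) (hfc : HasCompactSupport f) {r₀ : ℝ}
    (hr₀pos : 0 < r₀) (hsupp : tsupport f ⊆ {z : ℂ | ‖z‖ ≤ r₀}) {ζ : ℂ}
    (hζ : ‖ζ‖ * r₀ < 1) :
    Integrable
      (fun z => (f z : ℂ) * ((ζ * (starRingEnd ℂ) z + 1) / (ζ * (starRingEnd ℂ) z - 1)))
      (volume.restrict unitDisk) := by
  set C : ℝ := (1 + ‖ζ‖ * r₀) / (1 - ‖ζ‖ * r₀) with hC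
  have hδ : 0 < 1 - ‖ζ‖ * r₀ := by linarith
  refine Integrable.mono' (((integrable_f_disk hf hfc).norm).const_mul C) (meas_ker hf ζ) ?_
  filter_upwards with z
  by_cases hz0 : f z = 0
  · simp [hz0]
  · have hzr : ‖z‖ ≤ r₀ := supp_bound hsupp hz0
    have hden := hden_lb (le_refl (‖ζ‖)) hzr hr₀pos.le
    have hnum : ‖ζ * (starRingEnd ℂ) z + 1‖ ≤ 1 + ‖ζ‖ * r₀ := by
      calc ‖ζ * (starRingEnd ℂ) z + 1‖
          ≤ ‖ζ * (starRingEnd ℂ) z‖ + ‖1‖ := norm_add_le _ _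
        _ ≤ 1 + ‖ζ‖ * r₀ := by
            rw [norm_mul, Complex.norm_conj, norm_one]
            have : ‖ζ‖ * ‖z‖ ≤ ‖ζ‖ * r₀ :=
              mul_le_mul_of_nonneg_left hzr (norm_nonneg ζ)
            linarith
    rw [norm_mul, Complex.norm_real, norm_div]
    rw [mul_comm C ‖f z‖]
    apply mul_le_mul_of_nonneg_left _ (norm_nonneg _)
    rw [hC]
    exact div_le_div₀ (by positivity) (by simpa using hnum) hδ
      (by simpa using hden)

lemma gderiv {f : ℂ → ℝ} (hf : Continuous f) (hfc : HasCompactSupport f) {r₀ : ℝ}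
    (hr₀pos : 0 < r₀) (hsupp : tsupport f ⊆ {z : ℂ | ‖z‖ ≤ r₀}) {ζ₀ : ℂ}
    (hζ₀ : ‖ζ₀‖ < 1 / r₀) :
    Integrable
        (fun z => (f z : ℂ) * (-2 * (starRingEnd ℂ) z / (ζ₀ * (starRingEnd ℂ) z - 1) ^ 2))
        (volume.restrict unitDisk) ∧
      HasDerivAt (gfun f)
        (∫ z in unitDisk,
          (f z : ℂ) * (-2 * (starRingEnd ℂ) z / (ζ₀ * (starRingEnd ℂ) z - 1) ^ 2)) ζ₀ := by
  set ε : ℝ := (1 / r₀ - ‖ζ₀‖) / 2 with hε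
  have hεpos : 0 < ε := by rw [hε]; linarith
  set R : ℝ := ‖ζ₀‖ + ε with hR
  have hRr : R * r₀ < 1 := by
    have : R < 1 / r₀ := by rw [hR, hε]; linarith
    calc R * r₀ < (1 / r₀) * r₀ := by
          exact mul_lt_mul_of_pos_right this hr₀pos
      _ = 1 := by field_simp
  set δ : ℝ := 1 - R * r₀ with hδdef
  have hδ : 0 < δ := by rw [hδdef]; linarith
  have habs : ∀ ζ ∈ Metric.ball ζ₀ ε, ‖ζ‖ ≤ R := by
    intro ζ hζ
    have : dist ζ ζ₀ < ε := mem_ball.mp hζ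
    calc ‖ζ‖ = ‖ζ₀ + (ζ - ζ₀)‖ := by simp
      _ ≤ ‖ζ₀‖ + ‖ζ - ζ₀‖ := norm_add_le _ _
      _ ≤ R := by
          rw [hR]
          have : ‖ζ - ζ₀‖ < ε := by rwa [← dist_eq_norm]
          linarith
  have key := hasDerivAt_integral_of_dominated_loc_of_deriv_le (μ := volume.restrict unitDisk)
    (F := fun ζ z => (f z : ℂ) * ((ζ * (starRingEnd ℂ) z + 1) / (ζ * (starRingEnd ℂ) z - 1)))
    (F' := fun ζ z => (f z : ℂ) * (-2 * (starRingEnd ℂ) z / (ζ * (starRingEnd ℂ) z - 1) ^ 2))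
    (x₀ := ζ₀) (bound := fun z => 2 * r₀ / δ ^ 2 * ‖f z‖) (Metric.ball_mem_nhds ζ₀ hεpos)
    (Filter.Eventually.of_forall fun ζ => meas_ker hf ζ)
    (integrable_ker hf hfc hr₀pos hsupp ((lt_div_iff₀ hr₀pos).mp hζ₀))
    (meas_ker' hf ζ₀)
    ?_ (((integrable_f_disk hf hfc).norm).const_mul _) ?_
  · exact ⟨key.1, key.2⟩
  · -- bound
    filter_upwards with z
    intro ζ hζ
    by_cases hz0 : f z = 0
    · simp [hz0]
    · have hzr : ‖z‖ ≤ r₀ := supp_bound hsupp hz0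
      have hden := hden_lb (habs ζ hζ) hzr hr₀pos.le
      rw [norm_mul, Complex.norm_real, norm_div, mul_comm (2 * r₀ / δ ^ 2) ‖f z‖]
      apply mul_le_mul_of_nonneg_left _ (norm_nonneg _)
      have hnum : ‖(-2 : ℂ) * (starRingEnd ℂ) z‖ ≤ 2 * r₀ := by
        rw [norm_mul]
        have h2 : ‖(-2 : ℂ)‖ = 2 := by norm_num
        rw [h2, Complex.norm_conj]
        exact mul_le_mul_of_nonneg_left hzr (by norm_num)
      have hden2 : δ ^ 2 ≤ ‖(ζ * (starRingEnd ℂ) z - 1) ^ 2‖ := by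
        rw [norm_pow]
        exact pow_le_pow_left₀ hδ.le hden 2
      exact div_le_div₀ (by positivity) hnum (by positivity) hden2
  · -- differentiability
    filter_upwards with z
    intro ζ hζ
    by_cases hz0 : f z = 0
    · simp only [hz0, Complex.ofReal_zero, zero_mul]
      exact hasDerivAt_const _ 0
    · have hzr : ‖z‖ ≤ r₀ := supp_bound hsupp hz0
      have hden := hden_lb (habs ζ hζ) hzr hr₀pos.le
      have hne : ζ * (starRingEnd ℂ) z - 1 ≠ 0 := by
        intro h
        rw [h] at hden
        simp only [norm_zero] at hden
        linarith
      have hnum : HasDerivAt (fun ζ : ℂ => ζ * (starRingEnd ℂ) z + 1) ((starRingEnd ℂ) z) ζ := by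
        simpa using ((hasDerivAt_id ζ).mul_const ((starRingEnd ℂ) z)).add_const (1 : ℂ)
      have hdenD : HasDerivAt (fun ζ : ℂ => ζ * (starRingEnd ℂ) z - 1) ((starRingEnd ℂ) z) ζ := by
        simpa using ((hasDerivAt_id ζ).mul_const ((starRingEnd ℂ) z)).sub_const (1 : ℂ)
      have := (hnum.div hdenD hne).const_mul ((f z : ℝ) : ℂ)
      convert this using 1
      · rfl
      · rfl
      ring

lemma re_fderiv_apply {k : ℂ → ℂ} {x : ℂ} (hk : DifferentiableAt ℂ k x) (v : ℂ) :
    fderiv ℝ (fun y => (k y).re) x v = (deriv k x * v).re := by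
  have h1 : HasFDerivAt k (ContinuousLinearMap.smulRight (1 : ℂ →L[ℂ] ℂ) (deriv k x)) x :=
    hk.hasDerivAt.hasFDerivAt
  have h2 := Complex.reCLM.hasFDerivAt.comp x (h1.restrictScalars ℝ)
  have h3 : fderiv ℝ (fun y => (k y).re) x
      = Complex.reCLM.comp ((ContinuousLinearMap.smulRight (1 : ℂ →L[ℂ] ℂ)
          (deriv k x)).restrictScalars ℝ) := h2.fderiv
  rw [h3]
  simp [mul_comm]

lemma harmonicOnSet_re_holo {s : Set ℂ} (hs : IsOpen s) {h : ℂ → ℂ}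
    (hh : DifferentiableOn ℂ h s) {u : ℂ → ℝ} (hu : ∀ z ∈ s, u z = (h z).re) :
    HarmonicOnSet u s := by
  have han : AnalyticOnNhd ℂ h s := hh.analyticOnNhd hs
  have hd1 : AnalyticOnNhd ℂ (deriv h) s := han.deriv
  constructor
  · have hC : ContDiffOn ℂ 2 h s := han.contDiffOn hs.uniqueDiffOn
    have h2 : ContDiffOn ℝ 2 (fun z => (h z).re) s :=
      Complex.reCLM.contDiff.comp_contDiffOn (hC.restrict_scalars ℝ)
    exact h2.congr hu
  · intro z hz
    have hsz : s ∈ nhds z := hs.mem_nhds hz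
    have hA : ∀ v : ℂ, ∀ x ∈ s, fderiv ℝ u x v = (deriv h x * v).re := by
      intro v x hx
      have hev : u =ᶠ[nhds x] fun y => (h y).re :=
        Filter.eventuallyEq_of_mem (hs.mem_nhds hx) hu
      rw [hev.fderiv_eq]
      exact re_fderiv_apply (han x hx).differentiableAt v
    have hB1 : fderiv ℝ (fun x => fderiv ℝ u x 1) z 1 = (deriv (deriv h) z).re := by
      have hev : (fun x => fderiv ℝ u x 1) =ᶠ[nhds z] fun x => ((fun y => deriv h y) x).re := by
        filter_upwards [hsz] with x hx
        rw [hA 1 x hx, mul_one]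
      rw [hev.fderiv_eq, re_fderiv_apply (hd1 z hz).differentiableAt 1, mul_one]
    have hB2 : fderiv ℝ (fun x => fderiv ℝ u x Complex.I) z Complex.I
        = -(deriv (deriv h) z).re := by
      have hev : (fun x => fderiv ℝ u x Complex.I) =ᶠ[nhds z]
          fun x => ((fun y => deriv h y * Complex.I) x).re := by
        filter_upwards [hsz] with x hx
        rw [hA Complex.I x hx]
      rw [hev.fderiv_eq]
      have hk : DifferentiableAt ℂ (fun y => deriv h y * Complex.I) z :=
        (hd1 z hz).differentiableAt.mul_const _
      rw [re_fderiv_apply hk Complex.I]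
      rw [deriv_mul_const (hd1 z hz).differentiableAt]
      have : deriv (deriv h) z * Complex.I * Complex.I = -(deriv (deriv h) z) := by
        rw [mul_assoc, Complex.I_mul_I, mul_neg_one]
      rw [this, Complex.neg_re]
    rw [hB1, hB2]
    ring

lemma uExt_eq {f : ℂ → ℝ} (hf : Continuous f) (hfc : HasCompactSupport f) {r₀ : ℝ}
    (hr₀pos : 0 < r₀) (hsupp : tsupport f ⊆ {z : ℂ | ‖z‖ ≤ r₀}) {ζ : ℂ}
    (hζ : ‖ζ‖ * r₀ < 1) :
    uExt f ζ = -(1 / (2 * Real.pi)) * (gfun f ζ).re := by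
  unfold uExt gfun
  congr 1
  have hint := integrable_ker hf hfc hr₀pos hsupp hζ
  have := integral_re hint
  simp only [RCLike.re_to_complex] at this
  rw [← this]
  apply integral_congr_ae
  filter_upwards with z
  simp [Complex.mul_re]

end Statement2Aux

/-- `u` is harmonic on `{|ζ| < 1/r₀}`, agrees with `H*f` on the unit circle, and its radial
derivative at the circle is `(1/2π) ∫_𝔻 f(z) Re(2wz/(w−z)²) dλ(z)` (so the inward normal
derivative of the harmonic extension of `H*f` at `w` is minus this quantity). -/
theorem statement2 (f : ℂ → ℝ) (hf : ContDiff ℝ (⊤ : ℕ∞) f) (hfc : HasCompactSupport f)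
    (r₀ : ℝ) (hr₀pos : 0 < r₀) (hr₀ : r₀ < 1)
    (hsupp : tsupport f ⊆ {z : ℂ | ‖z‖ ≤ r₀}) :
    HarmonicOnSet (uExt f) (Metric.ball 0 (1 / r₀)) ∧
      (∀ w ∈ unitCircle, uExt f w = Hstar f w) ∧
      (∀ w ∈ unitCircle,
        deriv (fun r : ℝ => uExt f ((r : ℂ) * w)) 1 =
          (1 / (2 * Real.pi)) * ∫ z in unitDisk, f z * (2 * w * z / (w - z) ^ 2).re) := by
  open Statement2Aux in
  have hfcont : Continuous f := hf.continuous
  have habs_ball : ∀ ζ : ℂ, ζ ∈ Metric.ball (0 : ℂ) (1 / r₀) → ‖ζ‖ < 1 / r₀ := by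
    intro ζ hζ
    simpa using mem_ball_zero_iff.mp hζ
  have hmul : ∀ ζ : ℂ, ‖ζ‖ < 1 / r₀ → ‖ζ‖ * r₀ < 1 := by
    intro ζ hζ
    calc ‖ζ‖ * r₀ < (1 / r₀) * r₀ := mul_lt_mul_of_pos_right hζ hr₀pos
      _ = 1 := by field_simp
  have hcircle_abs : ∀ w ∈ unitCircle, ‖w‖ = 1 := by
    intro w hw
    simpa using mem_sphere_zero_iff_norm.mp hw
  have hone_lt : (1 : ℝ) < 1 / r₀ := one_lt_one_div hr₀pos hr₀
  refine ⟨?_, ?_, ?_⟩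
  · -- Harmonicity
    apply harmonicOnSet_re_holo (h := fun ζ => ((-(1 / (2 * Real.pi)) : ℝ) : ℂ) * gfun f ζ)
      Metric.isOpen_ball
    · intro ζ hζ
      have hd := (gderiv hfcont hfc hr₀pos hsupp (habs_ball ζ hζ)).2
      exact (hd.differentiableAt.const_mul _).differentiableWithinAt
    · intro ζ hζ
      rw [uExt_eq hfcont hfc hr₀pos hsupp (hmul ζ (habs_ball ζ hζ))]
      simp [Complex.mul_re]
  · -- boundary value
    intro w hw
    have hw1 : ‖w‖ = 1 := hcircle_abs w hw
    unfold uExt Hstar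
    have hcongr : ∫ z in unitDisk,
        f z * ((w * (starRingEnd ℂ) z + 1) / (w * (starRingEnd ℂ) z - 1)).re
        = ∫ z in unitDisk, -(((w + z) / (w - z)).re * f z) := by
      apply setIntegral_congr_fun (by exact measurableSet_ball)
      intro z hz
      dsimp only
      have hz1 : ‖z‖ < 1 := by
        simpa using mem_ball_zero_iff.mp hz
      rw [key1 hw1 hz1]
      ring
    rw [hcongr, integral_neg]
    ring
  · -- radial derivative
    intro w hw
    have hw1 : ‖w‖ = 1 := hcircle_abs w hw
    have hwlt : ‖w‖ < 1 / r₀ := by rw [hw1]; exact hone_lt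
    obtain ⟨hint', hder⟩ := gderiv hfcont hfc hr₀pos hsupp hwlt
    set D : ℂ := ∫ z in unitDisk,
      (f z : ℂ) * (-2 * (starRingEnd ℂ) z / (w * (starRingEnd ℂ) z - 1) ^ 2) with hD
    have h1 : HasDerivAt (fun r : ℝ => (r : ℂ) * w) w 1 := by
      simpa using Complex.ofRealCLM.hasDerivAt.mul_const w
    have h3 : HasDerivAt (fun r : ℝ => gfun f ((r : ℂ) * w)) (w * D) 1 := by
      have hder2 : HasFDerivAt (gfun f)
          ((ContinuousLinearMap.smulRight (1 : ℂ →L[ℂ] ℂ) D).restrictScalars ℝ)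
          (((1 : ℝ) : ℂ) * w) := by
        rw [show (((1 : ℝ) : ℂ) * w) = w by norm_num]
        exact (hder.hasFDerivAt).restrictScalars ℝ
      have := HasFDerivAt.comp_hasDerivAt (1 : ℝ) hder2 h1
      convert this using 1
      · rfl
      · rfl
      simp
    have h4 : HasDerivAt (fun r : ℝ => -(1 / (2 * Real.pi)) * ((gfun f ((r : ℂ) * w)).re))
        (-(1 / (2 * Real.pi)) * (w * D).re) 1 := by
      have := HasFDerivAt.comp_hasDerivAt (1 : ℝ) Complex.reCLM.hasFDerivAt h3
      simpa [Function.comp] using this.const_mul (-(1 / (2 * Real.pi)))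
    have hball : (fun r : ℝ => uExt f ((r : ℂ) * w))
        =ᶠ[nhds (1 : ℝ)] fun r : ℝ => -(1 / (2 * Real.pi)) * ((gfun f ((r : ℂ) * w)).re) := by
      have hIoo : Set.Ioo (0 : ℝ) (1 / r₀) ∈ nhds (1 : ℝ) :=
        Ioo_mem_nhds (by norm_num) hone_lt
      filter_upwards [hIoo] with r hr
      apply uExt_eq hfcont hfc hr₀pos hsupp
      apply hmul
      rw [norm_mul, hw1, mul_one, Complex.norm_real, Real.norm_eq_abs, abs_of_pos hr.1]
      exact hr.2
    rw [hball.deriv_eq, h4.deriv]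
    -- now compute -(1/(2π)) * (w*D).re
    have hwD : w * D = ∫ z in unitDisk,
        w * ((f z : ℂ) * (-2 * (starRingEnd ℂ) z / (w * (starRingEnd ℂ) z - 1) ^ 2)) := by
      rw [hD, ← integral_const_mul]
    have hre := integral_re (hint'.const_mul w)
    simp only [RCLike.re_to_complex] at hre
    have hcongr : ∫ z in unitDisk,
        (w * ((f z : ℂ) * (-2 * (starRingEnd ℂ) z / (w * (starRingEnd ℂ) z - 1) ^ 2))).re
        = ∫ z in unitDisk, -(f z * (2 * w * z / (w - z) ^ 2).re) := by
      apply setIntegral_congr_fun (by exact measurableSet_ball)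
      intro z hz
      dsimp only
      have hz1 : ‖z‖ < 1 := by
        simpa using mem_ball_zero_iff.mp hz
      have hrw : w * ((f z : ℂ) * (-2 * (starRingEnd ℂ) z / (w * (starRingEnd ℂ) z - 1) ^ 2))
          = (f z : ℂ) * (-(2 * w * (starRingEnd ℂ) z / (w * (starRingEnd ℂ) z - 1) ^ 2)) := by
        ring
      rw [hrw]
      simp only [Complex.mul_re, Complex.ofReal_re, Complex.ofReal_im, Complex.neg_re,
        Complex.neg_im, zero_mul, sub_zero]
      rw [key2 hw1 hz1]
      ring
    rw [hwD, ← hre, hcongr, integral_neg]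
    ring
end
end

section
/- Let μ be a finite Borel measure on the unit circle 𝕌 and let z₁, z₂ ∈ 𝔻 with z₁ ≠ z₂. Then Re( (L_μ(z₁) − L_μ(z₂))/(z₁ − z₂) + conj(z₂)·L_μ(z₁)/(1 − z₁·conj(z₂)) + conj(z₁)·L_μ(z₂)/(1 − z₂·conj(z₁)) ) = ∫_𝕌 Re((w+z₁)/(w−z₁)) · Re((w+z₂)/(w−z₂)) dμ(w). (This is the Hadamard variation formula (d/dt)|_{t=0} G_t(z₁,z₂) = 2π ∫_𝕌 ∂_n G(w,z₁) ∂_n G(w,z₂) dμ(w) for the Green function under the Loewner flow driven by μ, since the right-hand side equals (2π)² ∫_𝕌 H(z₁,w)H(z₂,w) dμ(w).) -/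
noncomputable section

open MeasureTheory ComplexConjugate

lemma nonzero_one_sub (z w : ℂ) (hz : ‖z‖ < 1) (hw : ‖w‖ ≤ 1) : 1 - z * w ≠ 0 := by
  intro h
  rw [sub_eq_zero] at h
  have h2 : ‖z * w‖ < 1 := by
    calc ‖z * w‖ = ‖z‖ * ‖w‖ := norm_mul _ _
    _ ≤ ‖z‖ * 1 := mul_le_mul_of_nonneg_left hw (norm_nonneg _)
    _ < 1 := by simpa using hz
  rw [← h, norm_one] at h2; linarith

lemma sub_ne' (z w : ℂ) (hz : ‖z‖ < 1) (hw : ‖w‖ = 1) : z - w ≠ 0 := by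
  intro h; rw [sub_eq_zero] at h; rw [h, hw] at hz; linarith

set_option maxHeartbeats 1000000 in
/-- Purely algebraic core identity, with `c₁, c₂` playing the role of the conjugates of
`z₁, z₂`. -/
lemma alg (z₁ z₂ c₁ c₂ w : ℂ)
    (hne : z₁ - z₂ ≠ 0) (hnec : c₁ - c₂ ≠ 0)
    (h1 : z₁ - w ≠ 0) (h2 : z₂ - w ≠ 0) (h1' : w - z₁ ≠ 0) (h2' : w - z₂ ≠ 0)
    (k1 : c₁ * w - 1 ≠ 0) (k2 : c₂ * w - 1 ≠ 0)
    (k1' : 1 - w * c₁ ≠ 0) (k2' : 1 - w * c₂ ≠ 0)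
    (hp : 1 - z₁ * c₂ ≠ 0) (hq : 1 - z₂ * c₁ ≠ 0)
    (hp' : 1 - c₂ * z₁ ≠ 0) (hq' : 1 - c₁ * z₂ ≠ 0) :
    2 * (((-(z₁ - z₂)⁻¹ - c₂ / (1 - z₁ * c₂)) * (z₁ * ((z₁ + w) / (z₁ - w)))
        + ((z₁ - z₂)⁻¹ - c₁ / (1 - z₂ * c₁)) * (z₂ * ((z₂ + w) / (z₂ - w))))
      + ((-(c₁ - c₂)⁻¹ - z₂ / (1 - c₁ * z₂)) * (c₁ * ((c₁ * w + 1) / (c₁ * w - 1)))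
        + ((c₁ - c₂)⁻¹ - z₁ / (1 - c₂ * z₁)) * (c₂ * ((c₂ * w + 1) / (c₂ * w - 1)))))
    = ((w + z₁) / (w - z₁) + (1 + w * c₁) / (1 - w * c₁))
      * ((w + z₂) / (w - z₂) + (1 + w * c₂) / (1 - w * c₂)) := by
  have hf₁ : z₁ * ((z₁ + w) / (z₁ - w)) = -z₁ - 2 * z₁ ^ 2 / (w - z₁) := by
    field_simp
    try ring
  have hf₂ : z₂ * ((z₂ + w) / (z₂ - w)) = -z₂ - 2 * z₂ ^ 2 / (w - z₂) := by
    field_simp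
    try ring
  have hg₁ : c₁ * ((c₁ * w + 1) / (c₁ * w - 1)) = c₁ - 2 * c₁ / (1 - w * c₁) := by
    have : 1 - c₁ * w ≠ 0 := by rwa [mul_comm]
    field_simp
    try ring
  have hg₂ : c₂ * ((c₂ * w + 1) / (c₂ * w - 1)) = c₂ - 2 * c₂ / (1 - w * c₂) := by
    have : 1 - c₂ * w ≠ 0 := by rwa [mul_comm]
    field_simp
    try ring
  have hA₁ : (w + z₁) / (w - z₁) = 1 + 2 * z₁ / (w - z₁) := by
    field_simp
    try ring
  have hA₂ : (w + z₂) / (w - z₂) = 1 + 2 * z₂ / (w - z₂) := by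
    field_simp
    try ring
  have hB₁ : (1 + w * c₁) / (1 - w * c₁) = -1 + 2 / (1 - w * c₁) := by
    field_simp
    try ring
  have hB₂ : (1 + w * c₂) / (1 - w * c₂) = -1 + 2 / (1 - w * c₂) := by
    field_simp
    try ring
  have P1 : (w - z₁)⁻¹ * (w - z₂)⁻¹ = ((w - z₁)⁻¹ - (w - z₂)⁻¹) * (z₁ - z₂)⁻¹ := by
    field_simp
    try ring
  have P2 : (w - z₁)⁻¹ * (1 - w * c₂)⁻¹
      = ((w - z₁)⁻¹ + c₂ * (1 - w * c₂)⁻¹) * (1 - z₁ * c₂)⁻¹ := by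
    field_simp
    try ring
  have P3 : (w - z₂)⁻¹ * (1 - w * c₁)⁻¹
      = ((w - z₂)⁻¹ + c₁ * (1 - w * c₁)⁻¹) * (1 - z₂ * c₁)⁻¹ := by
    field_simp
    try ring
  have P4 : (1 - w * c₁)⁻¹ * (1 - w * c₂)⁻¹
      = (c₁ * (1 - w * c₁)⁻¹ - c₂ * (1 - w * c₂)⁻¹) * (c₁ - c₂)⁻¹ := by
    field_simp
    try ring
  have hs : (z₁ - z₂) * (z₁ - z₂)⁻¹ = 1 := mul_inv_cancel₀ hne
  have hr : (c₁ - c₂) * (c₁ - c₂)⁻¹ = 1 := mul_inv_cancel₀ hnec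
  have hhp : (1 - z₁ * c₂) * (1 - z₁ * c₂)⁻¹ = 1 := mul_inv_cancel₀ hp
  have hhq : (1 - z₂ * c₁) * (1 - z₂ * c₁)⁻¹ = 1 := mul_inv_cancel₀ hq
  rw [hf₁, hf₂, hg₁, hg₂, hA₁, hA₂, hB₁, hB₂]
  linear_combination (-(4 * z₁ * z₂)) * P1 - (4 * z₁) * P2 - (4 * z₂) * P3 - 4 * P4
    + (4 * z₁ / (w - z₁) + 4 * z₂ / (w - z₂) + 2) * hs
    - (4 * z₁ / (w - z₁)) * hhp - (4 * z₂ / (w - z₂)) * hhq - 2 * hr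

/-- The pointwise identity on the unit circle. -/
lemma key_s4 (z₁ z₂ w : ℂ) (hz₁ : ‖z₁‖ < 1) (hz₂ : ‖z₂‖ < 1) (hw : ‖w‖ = 1)
    (hne : z₁ ≠ z₂) :
    (((-(z₁ - z₂)⁻¹ - conj z₂ / (1 - z₁ * conj z₂)) * (z₁ * ((z₁ + w) / (z₁ - w)))
      + ((z₁ - z₂)⁻¹ - conj z₁ / (1 - z₂ * conj z₁)) * (z₂ * ((z₂ + w) / (z₂ - w))))).re
    = ((w + z₁) / (w - z₁)).re * ((w + z₂) / (w - z₂)).re := by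
  have hu : w * conj w = 1 := by
    rw [Complex.mul_conj]
    norm_cast
    simp [Complex.normSq_eq_norm_sq, hw]
  have h1 : z₁ - w ≠ 0 := sub_ne' _ _ hz₁ hw
  have h2 : z₂ - w ≠ 0 := sub_ne' _ _ hz₂ hw
  have h1' : w - z₁ ≠ 0 := fun h => h1 (by linear_combination -h)
  have h2' : w - z₂ ≠ 0 := fun h => h2 (by linear_combination -h)
  have hne' : z₁ - z₂ ≠ 0 := sub_ne_zero.mpr hne
  have hnec : conj z₁ - conj z₂ ≠ 0 := by
    rw [← map_sub]; exact (map_ne_zero _).mpr hne'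
  have hcw1 : conj z₁ - conj w ≠ 0 := by
    rw [← map_sub]; exact (map_ne_zero _).mpr h1
  have hcw2 : conj z₂ - conj w ≠ 0 := by
    rw [← map_sub]; exact (map_ne_zero _).mpr h2
  have hcw1' : conj w - conj z₁ ≠ 0 := fun h => hcw1 (by linear_combination -h)
  have hcw2' : conj w - conj z₂ ≠ 0 := fun h => hcw2 (by linear_combination -h)
  have hk1' : 1 - w * conj z₁ ≠ 0 := by
    have := nonzero_one_sub (conj z₁) w (by rwa [RCLike.norm_conj]) hw.le
    intro h; exact this (by linear_combination h)
  have hk2' : 1 - w * conj z₂ ≠ 0 := by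
    have := nonzero_one_sub (conj z₂) w (by rwa [RCLike.norm_conj]) hw.le
    intro h; exact this (by linear_combination h)
  have hk1 : conj z₁ * w - 1 ≠ 0 := fun h => hk1' (by linear_combination -h)
  have hk2 : conj z₂ * w - 1 ≠ 0 := fun h => hk2' (by linear_combination -h)
  have hp : 1 - z₁ * conj z₂ ≠ 0 :=
    nonzero_one_sub _ _ hz₁ (by rw [RCLike.norm_conj]; exact hz₂.le)
  have hq : 1 - z₂ * conj z₁ ≠ 0 :=
    nonzero_one_sub _ _ hz₂ (by rw [RCLike.norm_conj]; exact hz₁.le)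
  have hp' : 1 - conj z₂ * z₁ ≠ 0 := fun h => hp (by linear_combination h)
  have hq' : 1 - conj z₁ * z₂ ≠ 0 := fun h => hq (by linear_combination h)
  -- rewrite the conjugated fractions
  have e₁ : (conj z₁ + conj w) / (conj z₁ - conj w)
      = (conj z₁ * w + 1) / (conj z₁ * w - 1) := by
    rw [div_eq_div_iff hcw1 hk1]
    linear_combination (2 * conj z₁) * hu
  have e₂ : (conj z₂ + conj w) / (conj z₂ - conj w)
      = (conj z₂ * w + 1) / (conj z₂ * w - 1) := by
    rw [div_eq_div_iff hcw2 hk2]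
    linear_combination (2 * conj z₂) * hu
  have eA : (conj w + conj z₁) / (conj w - conj z₁)
      = (1 + w * conj z₁) / (1 - w * conj z₁) := by
    rw [div_eq_div_iff hcw1' hk1']
    linear_combination (-2 * conj z₁) * hu
  have eB : (conj w + conj z₂) / (conj w - conj z₂)
      = (1 + w * conj z₂) / (1 - w * conj z₂) := by
    rw [div_eq_div_iff hcw2' hk2']
    linear_combination (-2 * conj z₂) * hu
  set G : ℂ := (-(z₁ - z₂)⁻¹ - conj z₂ / (1 - z₁ * conj z₂)) * (z₁ * ((z₁ + w) / (z₁ - w)))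
      + ((z₁ - z₂)⁻¹ - conj z₁ / (1 - z₂ * conj z₁)) * (z₂ * ((z₂ + w) / (z₂ - w))) with hG
  set A : ℂ := (w + z₁) / (w - z₁) with hA
  set B : ℂ := (w + z₂) / (w - z₂) with hB
  have hGbar : conj G = (-(conj z₁ - conj z₂)⁻¹ - z₂ / (1 - conj z₁ * z₂))
        * (conj z₁ * ((conj z₁ * w + 1) / (conj z₁ * w - 1)))
      + ((conj z₁ - conj z₂)⁻¹ - z₁ / (1 - conj z₂ * z₁))
        * (conj z₂ * ((conj z₂ * w + 1) / (conj z₂ * w - 1))) := by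
    rw [hG]
    simp only [map_add, map_sub, map_mul, map_div₀, map_neg, map_inv₀, map_one,
      Complex.conj_conj]
    rw [e₁, e₂]
  have hAbar : conj A = (1 + w * conj z₁) / (1 - w * conj z₁) := by
    rw [hA, map_div₀, map_add, map_sub, eA]
  have hBbar : conj B = (1 + w * conj z₂) / (1 - w * conj z₂) := by
    rw [hB, map_div₀, map_add, map_sub, eB]
  have main : 2 * (G + conj G) = (A + conj A) * (B + conj B) := by
    rw [hGbar, hAbar, hBbar, hG, hA, hB]
    exact alg z₁ z₂ (conj z₁) (conj z₂) w hne' hnec h1 h2 h1' h2' hk1 hk2 hk1' hk2'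
      hp hq hp' hq'
  have hGre := Complex.add_conj G
  have hAre := Complex.add_conj A
  have hBre := Complex.add_conj B
  rw [hGre, hAre, hBre] at main
  have hr : 2 * (2 * (G.re : ℝ)) = (2 * A.re) * (2 * B.re) := by exact_mod_cast main
  linear_combination hr / 4

/-- Integrability of the Loewner integrand over a measure supported on the circle. -/
lemma integrable_f (μ : Measure ℂ) [IsFiniteMeasure μ] (hμ : μ unitCircleᶜ = 0)
    (z : ℂ) (hz : ‖z‖ < 1) :
    Integrable (fun w : ℂ => z * ((z + w) / (z - w))) μ := by
  have hae : ∀ᵐ w ∂μ, w ∈ unitCircle := by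
    rw [MeasureTheory.ae_iff]
    exact measure_mono_null (fun x hx => hx) hμ
  have hms : AEStronglyMeasurable (fun w : ℂ => z * ((z + w) / (z - w))) μ := by
    apply Measurable.aestronglyMeasurable
    fun_prop
  refine ⟨hms, ?_⟩
  apply MeasureTheory.HasFiniteIntegral.of_bounded
    (C := ‖z‖ * ((‖z‖ + 1) / (1 - ‖z‖)))
  filter_upwards [hae] with w hw
  have hw1 : ‖w‖ = 1 := by simpa [unitCircle] using hw
  have hzw : (1 : ℝ) - ‖z‖ ≤ ‖z - w‖ := by
    calc (1:ℝ) - ‖z‖ = ‖w‖ - ‖z‖ := by rw [hw1]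
    _ ≤ ‖w - z‖ := norm_sub_norm_le _ _
    _ = ‖z - w‖ := norm_sub_rev _ _
  have hpos : (0:ℝ) < 1 - ‖z‖ := by linarith
  rw [norm_mul, norm_div]
  apply mul_le_mul_of_nonneg_left _ (norm_nonneg z)
  apply div_le_div₀ (by positivity) _ hpos hzw
  calc ‖z + w‖ ≤ ‖z‖ + ‖w‖ := norm_add_le _ _
  _ = ‖z‖ + 1 := by rw [hw1]

/-- Hadamard variation formula for the Green function under the Loewner flow driven by `μ`:
`Re((L_μ(z₁)−L_μ(z₂))/(z₁−z₂) + conj(z₂)L_μ(z₁)/(1−z₁ conj z₂) + conj(z₁)L_μ(z₂)/(1−z₂ conj z₁))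
  = ∫_𝕌 Re((w+z₁)/(w−z₁)) Re((w+z₂)/(w−z₂)) dμ(w)`. -/
theorem statement4 (μ : Measure ℂ) [IsFiniteMeasure μ] (hμ : μ unitCircleᶜ = 0)
    (z₁ z₂ : ℂ) (hz₁ : z₁ ∈ unitDisk) (hz₂ : z₂ ∈ unitDisk) (hne : z₁ ≠ z₂) :
    ((Lmu μ z₁ - Lmu μ z₂) / (z₁ - z₂)
      + (starRingEnd ℂ) z₂ * Lmu μ z₁ / (1 - z₁ * (starRingEnd ℂ) z₂)
      + (starRingEnd ℂ) z₁ * Lmu μ z₂ / (1 - z₂ * (starRingEnd ℂ) z₁)).re =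
      ∫ w, ((w + z₁) / (w - z₁)).re * ((w + z₂) / (w - z₂)).re ∂μ := by
  have hz₁' : ‖z₁‖ < 1 := by simpa [unitDisk, Metric.mem_ball] using hz₁
  have hz₂' : ‖z₂‖ < 1 := by simpa [unitDisk, Metric.mem_ball] using hz₂
  have hf₁ := integrable_f μ hμ z₁ hz₁'
  have hf₂ := integrable_f μ hμ z₂ hz₂'
  set a : ℂ := -(z₁ - z₂)⁻¹ - conj z₂ / (1 - z₁ * conj z₂) with ha
  set b : ℂ := (z₁ - z₂)⁻¹ - conj z₁ / (1 - z₂ * conj z₁) with hb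
  have hint : Integrable (fun w : ℂ => a * (z₁ * ((z₁ + w) / (z₁ - w)))
      + b * (z₂ * ((z₂ + w) / (z₂ - w)))) μ :=
    (hf₁.const_mul a).add (hf₂.const_mul b)
  have hI : ∫ w, (a * (z₁ * ((z₁ + w) / (z₁ - w)))
      + b * (z₂ * ((z₂ + w) / (z₂ - w)))) ∂μ
      = a * ∫ w, z₁ * ((z₁ + w) / (z₁ - w)) ∂μ
        + b * ∫ w, z₂ * ((z₂ + w) / (z₂ - w)) ∂μ := by
    rw [integral_add (hf₁.const_mul a) (hf₂.const_mul b),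
      show (∫ w, a * (z₁ * ((z₁ + w) / (z₁ - w))) ∂μ)
        = a * ∫ w, z₁ * ((z₁ + w) / (z₁ - w)) ∂μ from integral_const_mul a _,
      show (∫ w, b * (z₂ * ((z₂ + w) / (z₂ - w))) ∂μ)
        = b * ∫ w, z₂ * ((z₂ + w) / (z₂ - w)) ∂μ from integral_const_mul b _]
  have hLHS : (Lmu μ z₁ - Lmu μ z₂) / (z₁ - z₂)
      + (starRingEnd ℂ) z₂ * Lmu μ z₁ / (1 - z₁ * (starRingEnd ℂ) z₂)
      + (starRingEnd ℂ) z₁ * Lmu μ z₂ / (1 - z₂ * (starRingEnd ℂ) z₁)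
      = ∫ w, (a * (z₁ * ((z₁ + w) / (z₁ - w)))
          + b * (z₂ * ((z₂ + w) / (z₂ - w)))) ∂μ := by
    rw [hI, ha, hb]
    simp only [Lmu]
    ring
  have hre := integral_re hint
  simp only [RCLike.re_to_complex] at hre
  rw [hLHS, ← hre]
  apply integral_congr_ae
  have hae : ∀ᵐ w ∂μ, w ∈ unitCircle := by
    rw [MeasureTheory.ae_iff]
    exact measure_mono_null (fun x hx => hx) hμ
  filter_upwards [hae] with w hw
  have hw1 : ‖w‖ = 1 := by simpa [unitCircle] using hw
  have := key_s4 z₁ z₂ w hz₁' hz₂' hw1 hne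
  rw [ha, hb]
  simpa using this
end
end

section
/- Let P be holomorphic on an open neighborhood of the closed unit disk and let w' ∈ 𝕌. Then ∫_𝕌 Re( ((w+w')/(w'−w)) · (P(w') − P(w)) ) dλ(w) = 2π · Re( P(w') − P(0) ). (In the paper's notation: ∫_𝕌 V_p(w,w') dλ(w) = 2π (p(w') − mean of p), where p = Re P on 𝕌.) -/
noncomputable section

open Metric Set Complex intervalIntegral

/-- Contraction of the kernel `V_P` against arclength measure:
`∫_𝕌 Re(((w+w')/(w'−w))(P(w')−P(w))) dλ(w) = 2π Re(P(w') − P(0))`,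
i.e. `∫_𝕌 V_p(w,w') dλ(w) = 2π (p(w') − mean of p)` for `p = Re P`. -/
theorem statement8 (P : ℂ → ℂ) (U : Set ℂ) (hU : IsOpen U)
    (hUc : Metric.closedBall (0 : ℂ) 1 ⊆ U) (hP : DifferentiableOn ℂ P U)
    (w' : ℂ) (hw' : w' ∈ unitCircle) :
    ∫ θ in (0 : ℝ)..(2 * Real.pi),
        (((Complex.exp (θ * Complex.I) + w') / (w' - Complex.exp (θ * Complex.I))) *
          (P w' - P (Complex.exp (θ * Complex.I)))).re =
      2 * Real.pi * (P w' - P 0).re := by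
  have hw1 : ‖w'‖ = 1 := by
    simpa [unitCircle, Complex.dist_eq] using hw'
  have hw'cb : w' ∈ closedBall (0 : ℂ) 1 := by
    simp [Complex.dist_eq, hw1]
  have hw'U : w' ∈ U := hUc hw'cb
  set Q : ℂ → ℂ := fun w => (w + w') * dslope P w' w with hQdef
  have hQdiff : DifferentiableOn ℂ Q U := by
    have hd : DifferentiableOn ℂ (dslope P w') U :=
      (differentiableOn_dslope (hU.mem_nhds hw'U)).mpr hP
    exact (differentiableOn_id.add (differentiableOn_const _)).mul hd
  -- value of Q away from w'
  have hQval : ∀ w : ℂ, w ≠ w' → Q w = ((w + w') / (w' - w)) * (P w' - P w) := by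
    intro w hw
    have h1 : w' - w ≠ 0 := sub_ne_zero.mpr (Ne.symm hw)
    rw [hQdef]
    simp only
    rw [dslope_of_ne P hw]
    rw [slope_def_field]
    have h2 : w - w' ≠ 0 := sub_ne_zero.mpr hw
    field_simp
    ring
  have hQ0 : Q 0 = P w' - P 0 := by
    have hw'0 : w' ≠ 0 := fun h => by rw [h] at hw1; simp at hw1
    rw [hQval 0 (Ne.symm hw'0)]
    field_simp
    simp
  -- Cauchy integral formula
  have hdcc : DiffContOnCl ℂ Q (ball (0 : ℂ) 1) := by
    apply DifferentiableOn.diffContOnCl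
    refine hQdiff.mono ?_
    rw [closure_ball (0 : ℂ) one_ne_zero]
    exact hUc
  have hcauchy := hdcc.circleIntegral_sub_inv_smul (w := 0) (by simp)
  rw [circleIntegral] at hcauchy
  simp only [deriv_circleMap, circleMap, smul_eq_mul, sub_zero, ofReal_one, one_mul,
    zero_add] at hcauchy
  have hne : ∀ θ : ℝ, Complex.exp (θ * I) ≠ 0 := fun θ => Complex.exp_ne_zero _
  have hsimp : ∀ θ : ℝ, Complex.exp (θ * I) * I * ((Complex.exp (θ * I))⁻¹ *
      Q (Complex.exp (θ * I))) = I * Q (Complex.exp (θ * I)) := by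
    intro θ
    rw [mul_comm (Complex.exp (θ * I)) I, mul_assoc, ← mul_assoc (Complex.exp (θ * I)),
      mul_inv_cancel₀ (hne θ), one_mul]
  rw [intervalIntegral.integral_congr (fun θ _ => hsimp θ)] at hcauchy
  rw [intervalIntegral.integral_const_mul] at hcauchy
  have hIne : (I : ℂ) ≠ 0 := Complex.I_ne_zero
  have hint : (∫ θ in (0:ℝ)..(2*Real.pi), Q (Complex.exp (θ * I)))
      = 2 * Real.pi * Q 0 := by
    apply mul_left_cancel₀ hIne
    rw [hcauchy]; ring
  -- continuity / integrability of Q ∘ exp(θ I)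
  have hQcont : ContinuousOn Q (closedBall (0:ℂ) 1) :=
    (hQdiff.continuousOn).mono hUc
  have hmap : ∀ θ : ℝ, Complex.exp (θ * I) ∈ closedBall (0:ℂ) 1 := by
    intro θ
    simp [Complex.dist_eq, Complex.norm_exp]
  have hcont : Continuous fun θ : ℝ => Q (Complex.exp (θ * I)) := by
    apply hQcont.comp_continuous
    · exact Complex.continuous_exp.comp (continuous_ofReal.mul continuous_const)
    · exact hmap
  have hintg : IntervalIntegrable (fun θ : ℝ => Q (Complex.exp (θ * I)))
      MeasureTheory.volume 0 (2*Real.pi) := hcont.intervalIntegrable _ _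
  -- real parts
  have hre : (∫ θ in (0:ℝ)..(2*Real.pi), Complex.reCLM (Q (Complex.exp (θ * I))))
      = Complex.reCLM (∫ θ in (0:ℝ)..(2*Real.pi), Q (Complex.exp (θ * I))) :=
    ContinuousLinearMap.intervalIntegral_comp_comm _ hintg
  -- a.e. equality between integrands
  have hae : ∀ᵐ θ : ℝ ∂MeasureTheory.volume,
      (((Complex.exp (θ * I) + w') / (w' - Complex.exp (θ * I))) *
          (P w' - P (Complex.exp (θ * I)))).re = (Q (Complex.exp (θ * I))).re := by
    obtain ⟨θ₀, hθ₀⟩ : ∃ θ₀ : ℝ, Complex.exp (θ₀ * I) = w' := by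
      obtain ⟨a, ha⟩ := (Complex.norm_eq_one_iff w').mp hw1
      exact ⟨a, ha⟩
    have hsub : {θ : ℝ | Complex.exp (θ * I) = w'} ⊆
        Set.range (fun n : ℤ => θ₀ + n * (2 * Real.pi)) := by
      intro θ hθ
      rw [Set.mem_setOf_eq, ← hθ₀, Complex.exp_eq_exp_iff_exists_int] at hθ
      obtain ⟨n, hn⟩ := hθ
      refine ⟨n, ?_⟩
      have : (θ : ℂ) = θ₀ + n * (2 * Real.pi) := by
        have hI : (θ : ℂ) * I = ((θ₀ : ℂ) + n * (2*Real.pi)) * I := by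
          rw [hn]; ring
        exact mul_right_cancel₀ Complex.I_ne_zero hI
      have hr : θ = θ₀ + n * (2 * Real.pi) := by exact_mod_cast this
      exact hr.symm
    have hnull : MeasureTheory.volume {θ : ℝ | Complex.exp (θ * I) = w'} = 0 :=
      MeasureTheory.measure_mono_null hsub ((Set.countable_range _).measure_zero _)
    filter_upwards [MeasureTheory.measure_eq_zero_iff_ae_notMem.mp hnull] with θ hθ
    rw [hQval _ hθ]
  calc ∫ θ in (0:ℝ)..(2*Real.pi),
        (((Complex.exp (θ * I) + w') / (w' - Complex.exp (θ * I))) *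
          (P w' - P (Complex.exp (θ * I)))).re
      = ∫ θ in (0:ℝ)..(2*Real.pi), (Q (Complex.exp (θ * I))).re :=
        intervalIntegral.integral_congr_ae (by
          filter_upwards [hae] with θ h _ using h)
    _ = (∫ θ in (0:ℝ)..(2*Real.pi), Q (Complex.exp (θ * I))).re := hre
    _ = 2 * Real.pi * (P w' - P 0).re := by
        rw [hint, hQ0]; simp
end
end

section
/- Let P be holomorphic on an open neighborhood of the closed unit disk with Im P(0) = 0, and let w ∈ 𝕌. Then lim_{δ→0⁺} (1/2π) ∫_{w' ∈ 𝕌 : |arg(w'·conj(w))| > δ} Re P(w') · Im( (w'+w)/(w'−w) ) dλ(w') = Im P(w). (That is, the principal-value integral (1/2π) p.v. ∫_𝕌 p(w') Im((w'+w)/(w'−w)) dλ(w') recovers the boundary values of the harmonic conjugate of p = Re P normalized to vanish at 0.) -/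
noncomputable section

open MeasureTheory

private lemma aux_re_ker (z w : ℂ) (hz : ‖z‖ = 1) (hw : ‖w‖ = 1) :
    ((z + w) / (z - w)).re = 0 := by
  have hz' : z.re * z.re + z.im * z.im = 1 := by
    have := Complex.sq_norm z; rw [hz] at this; simpa [Complex.normSq_apply] using this.symm
  have hw' : w.re * w.re + w.im * w.im = 1 := by
    have := Complex.sq_norm w; rw [hw] at this; simpa [Complex.normSq_apply] using this.symm
  rw [Complex.div_re, ← add_div]
  have : (z + w).re * (z - w).re + (z + w).im * (z - w).im = 0 := by
    simp only [Complex.add_re, Complex.sub_re, Complex.add_im, Complex.sub_im]; nlinarith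
  rw [this, zero_div]

private lemma aux_normSq_lb (z : ℂ) (hz : ‖z‖ = 1) (δ : ℝ) (hδ : 0 < δ)
    (h : δ ≤ |Complex.arg z|) : 2 - 2 * Real.cos δ ≤ Complex.normSq (z - 1) := by
  have hz0 : z ≠ 0 := by intro h0; rw [h0] at hz; simp at hz
  have hre : z.re = Real.cos (Complex.arg z) := by rw [Complex.cos_arg hz0, hz, div_one]
  have him : z.im = Real.sin (Complex.arg z) := by rw [Complex.sin_arg, hz, div_one]
  have hns : Complex.normSq (z - 1) = 2 - 2 * Real.cos (Complex.arg z) := by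
    simp only [Complex.normSq_apply, Complex.sub_re, Complex.sub_im, Complex.one_re,
      Complex.one_im, hre, him]
    nlinarith [Real.sin_sq_add_cos_sq (Complex.arg z)]
  rw [hns]
  have : Real.cos (Complex.arg z) ≤ Real.cos δ := by
    rw [← Real.cos_abs (Complex.arg z)]
    exact Real.cos_le_cos_of_nonneg_of_le_pi hδ.le (Complex.abs_arg_le_pi z) h
  linarith

private lemma aux_arg_exp {t : ℝ} (h1 : -Real.pi < t) (h2 : t ≤ Real.pi) :
    Complex.arg (Complex.exp (t * Complex.I)) = t := by
  rw [Complex.arg_exp_mul_I, toIocMod_eq_self]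
  constructor <;> [linarith; linarith]

private lemma aux_kappa_odd (t : ℝ) :
    ((Complex.exp ((-t : ℝ) * Complex.I) + 1) / (Complex.exp ((-t : ℝ) * Complex.I) - 1)).im
    = -((Complex.exp ((t : ℝ) * Complex.I) + 1) /
        (Complex.exp ((t : ℝ) * Complex.I) - 1)).im := by
  have : Complex.exp ((-t : ℝ) * Complex.I) = (starRingEnd ℂ) (Complex.exp ((t : ℝ) * Complex.I)) := by
    rw [← Complex.exp_conj]; congr 1; simp
  rw [this, ← map_one (starRingEnd ℂ), ← map_add, ← map_sub, ← map_div₀, Complex.conj_im, map_one]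

private lemma aux_cos_lt_one {δ : ℝ} (h0 : 0 < δ) (hπ : δ ≤ Real.pi) : Real.cos δ < 1 := by
  have h := Real.cos_lt_cos_of_nonneg_of_le_pi (le_refl 0) hπ h0
  simpa using h

/-- The principal-value integral `(1/2π) p.v. ∫_𝕌 Re P(w') Im((w'+w)/(w'−w)) dλ(w')` recovers
the boundary values of the harmonic conjugate of `p = Re P` normalized to vanish at `0`,
namely `Im P(w)`. -/
theorem statement12 (P : ℂ → ℂ) (U : Set ℂ) (hU : IsOpen U)
    (hUc : Metric.closedBall (0 : ℂ) 1 ⊆ U) (hP : DifferentiableOn ℂ P U)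
    (hP0 : (P 0).im = 0) (w : ℂ) (hw : w ∈ unitCircle) :
    Filter.Tendsto (fun δ : ℝ =>
        (1 / (2 * Real.pi)) * ∫ θ in {θ : ℝ | θ ∈ Set.Ioc 0 (2 * Real.pi) ∧
            δ < |Complex.arg (Complex.exp (θ * Complex.I) * (starRingEnd ℂ) w)|},
          (P (Complex.exp (θ * Complex.I))).re *
            ((Complex.exp (θ * Complex.I) + w) / (Complex.exp (θ * Complex.I) - w)).im)
      (nhdsWithin 0 (Set.Ioi 0)) (nhds ((P w).im)) := by
  have pi_pos := Real.pi_pos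
  have hw1 : ‖w‖ = 1 := by
    simpa [unitCircle, Complex.dist_eq] using hw
  have hw0 : w ≠ 0 := by intro h; rw [h] at hw1; simp at hw1
  have hwU : w ∈ U := hUc (by simp [Metric.mem_closedBall, Complex.dist_eq, hw1])
  have hwconj : w * (starRingEnd ℂ) w = 1 := by
    rw [Complex.mul_conj, Complex.normSq_eq_norm_sq, hw1]; norm_num
  set φ := w.arg with hφ
  have hexp : Complex.exp ((φ : ℂ) * Complex.I) = w := by
    conv_rhs => rw [← Complex.norm_mul_exp_arg_mul_I w]
    rw [hw1, Complex.ofReal_one, one_mul]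
  set h : ℂ → ℂ := fun z => dslope P w z * (z + w) with hh
  -- differentiability of h
  have hdsl : DifferentiableOn ℂ (dslope P w) U := by
    intro z hz
    rcases eq_or_ne z w with rfl | hne
    · rcases hP.analyticAt (hU.mem_nhds hz) with ⟨p, hp⟩
      exact hp.has_fpower_series_dslope_fslope.analyticAt.differentiableAt.differentiableWithinAt
    · exact (differentiableWithinAt_dslope_of_ne hne).2 (hP z hz)
  have hhd : DifferentiableOn ℂ h U :=
    hdsl.mul ((differentiable_id.add_const w).differentiableOn)
  have hhcb : DifferentiableOn ℂ h (Metric.closedBall 0 1) := hhd.mono hUc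
  have hcirc : ∀ θ : ℝ, Complex.exp ((θ : ℂ) * Complex.I) ∈ Metric.closedBall (0:ℂ) 1 := by
    intro θ
    simp [Metric.mem_closedBall, Complex.dist_eq, Complex.norm_exp_ofReal_mul_I]
  have hcont : Continuous fun θ : ℝ => h (Complex.exp ((θ : ℂ) * Complex.I)) := by
    apply hhcb.continuousOn.comp_continuous
    · exact (Complex.continuous_ofReal.mul continuous_const).cexp
    · exact hcirc
  -- value at 0
  have hh0 : h 0 = P w - P 0 := by
    rw [hh]
    simp only
    rw [dslope_of_ne P (show (0:ℂ) ≠ w from fun he => hw0 he.symm), slope_def_field]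
    field_simp
    ring
  -- Cauchy integral formula
  have hcauchy : ∫ θ in (0:ℝ)..(2*Real.pi), h (Complex.exp ((θ:ℂ)*Complex.I))
      = ((2*Real.pi : ℝ) : ℂ) * (P w - P 0) := by
    have h1 : (∮ z in C(0, 1), (z - 0)⁻¹ • h z) = (2 * Real.pi * Complex.I) • h 0 :=
      hhcb.circleIntegral_sub_inv_smul (by simp [Real.pi_pos])
    have h2 : (∮ z in C(0, 1), (z - 0)⁻¹ • h z)
        = ∫ θ in (0:ℝ)..(2*Real.pi), Complex.I * h (Complex.exp ((θ:ℂ) * Complex.I)) := by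
      simp only [circleIntegral, deriv_circleMap, circleMap, Complex.ofReal_one, one_mul,
        zero_add, smul_eq_mul, sub_zero]
      congr 1; ext θ
      rw [mul_comm (Complex.exp _) Complex.I, mul_assoc]
      congr 1
      rw [← mul_assoc, mul_inv_cancel₀ (Complex.exp_ne_zero _), one_mul]
    rw [h2, intervalIntegral.integral_const_mul, smul_eq_mul] at h1
    have h3 : (2 * (Real.pi:ℂ) * Complex.I) * h 0
        = Complex.I * (((2*Real.pi : ℝ) : ℂ) * (P w - P 0)) := by
      rw [hh0]; push_cast; ring
    rw [h3] at h1
    exact mul_left_cancel₀ Complex.I_ne_zero h1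
  -- imaginary part of the full integral
  have hIm2π : ∫ θ in (0:ℝ)..(2*Real.pi), (h (Complex.exp ((θ:ℂ)*Complex.I))).im
      = 2*Real.pi*(P w).im := by
    have hii : IntervalIntegrable (fun θ : ℝ => h (Complex.exp ((θ:ℂ)*Complex.I)))
        volume 0 (2*Real.pi) := hcont.intervalIntegrable _ _
    have h4 := ContinuousLinearMap.intervalIntegral_comp_comm Complex.imCLM hii
    simp only [Complex.imCLM_apply] at h4
    rw [h4, hcauchy]
    simp [Complex.sub_im, hP0]
  -- periodicity of the boundary parametrization
  have hper : ∀ θ : ℝ, Complex.exp (((θ + 2*Real.pi : ℝ) : ℂ) * Complex.I)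
      = Complex.exp ((θ:ℂ) * Complex.I) := by
    intro θ
    push_cast
    rw [add_mul, Complex.exp_add, Complex.exp_two_pi_mul_I, mul_one]
  -- the shifted boundary function and the kernel
  set J : ℝ → ℝ := fun t => (h (Complex.exp (((φ + t : ℝ) : ℂ) * Complex.I))).im with hJdef
  set κ : ℝ → ℝ := fun t => ((Complex.exp ((t:ℂ) * Complex.I) + 1) /
      (Complex.exp ((t:ℂ) * Complex.I) - 1)).im with hκdef
  have hJcont : Continuous J := by
    have : Continuous fun t : ℝ => φ + t := continuous_const.add continuous_id
    exact (Complex.continuous_im.comp hcont).comp this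
  have hJint : ∫ t in (-Real.pi)..Real.pi, J t = 2*Real.pi*(P w).im := by
    have hperiodic : Function.Periodic
        (fun θ : ℝ => (h (Complex.exp ((θ:ℂ)*Complex.I))).im) (2*Real.pi) := by
      intro θ
      simp only [hper θ]
    have e1 : ∫ t in (-Real.pi)..Real.pi, J t
        = ∫ θ in (φ + -Real.pi)..(φ + Real.pi), (h (Complex.exp ((θ:ℂ) * Complex.I))).im := by
      simp only [hJdef]
      exact intervalIntegral.integral_comp_add_left
        (fun θ : ℝ => (h (Complex.exp ((θ:ℂ) * Complex.I))).im) φ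
    have e2 := hperiodic.intervalIntegral_add_eq (φ + -Real.pi) 0
    rw [e1, show φ + Real.pi = φ + -Real.pi + (2*Real.pi) by ring, e2, zero_add, hIm2π]
  -- uniform bound for J
  obtain ⟨M, hM⟩ : ∃ M, ∀ t ∈ Set.Icc (-Real.pi) Real.pi, |J t| ≤ M := by
    obtain ⟨M, hM⟩ := isCompact_Icc.exists_bound_of_continuousOn
      (hJcont.continuousOn (s := Set.Icc (-Real.pi) Real.pi))
    exact ⟨M, fun t ht => by simpa using hM t ht⟩
  have hM0 : 0 ≤ M := le_trans (abs_nonneg _) (hM 0 ⟨by linarith, by linarith⟩)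
  have hmeasS : ∀ δ : ℝ, MeasurableSet {t : ℝ | δ < |t|} := fun δ =>
    (isOpen_lt continuous_const continuous_abs).measurableSet
  set A : ℝ → ℝ := fun δ =>
    ∫ t in Set.Ioc (-Real.pi) Real.pi, Set.indicator {t : ℝ | δ < |t|} J t with hAdef
  have hJIoc : IntegrableOn J (Set.Ioc (-Real.pi) Real.pi) := hJcont.integrableOn_Ioc
  have hL : ∫ t in Set.Ioc (-Real.pi) Real.pi, J t = 2*Real.pi*(P w).im := by
    rw [← intervalIntegral.integral_of_le (by linarith), hJint]
  -- the limit of A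
  have hdiff : ∀ δ : ℝ, 0 < δ → δ < Real.pi → |A δ - 2*Real.pi*(P w).im| ≤ M * (2*δ) := by
    intro δ hδ0 hδπ
    have hindint : IntegrableOn (Set.indicator {t : ℝ | δ < |t|} J)
        (Set.Ioc (-Real.pi) Real.pi) := hJIoc.indicator (hmeasS δ)
    have e3 : A δ - 2*Real.pi*(P w).im
        = - ∫ t in Set.Ioc (-Real.pi) Real.pi,
            Set.indicator {t : ℝ | δ < |t|}ᶜ J t := by
      rw [hAdef, ← hL, ← integral_sub hindint hJIoc]
      rw [← integral_neg]
      apply setIntegral_congr_fun measurableSet_Ioc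
      intro t _
      by_cases hc : δ < |t|
      · simp [Set.indicator, hc]
      · simp [Set.indicator, hc]
    rw [e3, abs_neg]
    have e4 : ∫ t in Set.Ioc (-Real.pi) Real.pi, Set.indicator {t : ℝ | δ < |t|}ᶜ J t
        = ∫ t in {t : ℝ | δ < |t|}ᶜ ∩ Set.Ioc (-Real.pi) Real.pi, J t := by
      rw [integral_indicator (hmeasS δ).compl, Measure.restrict_restrict (hmeasS δ).compl]
    rw [e4]
    set T := {t : ℝ | δ < |t|}ᶜ ∩ Set.Ioc (-Real.pi) Real.pi with hT
    have hTsub : T ⊆ Set.Icc (-δ) δ := by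
      intro t ht
      have := ht.1
      simp only [Set.mem_compl_iff, Set.mem_setOf_eq, not_lt] at this
      exact abs_le.mp this
    have hTvol : volume T ≤ ENNReal.ofReal (2*δ) := by
      refine le_trans (measure_mono hTsub) ?_
      rw [Real.volume_Icc]
      apply le_of_eq
      congr 1
      ring
    have hTfin : volume T < ⊤ := lt_of_le_of_lt hTvol ENNReal.ofReal_lt_top
    have hbound : ∀ t ∈ T, ‖J t‖ ≤ M := by
      intro t ht
      have h2 := ht.2
      exact (by simpa using hM t ⟨h2.1.le, h2.2⟩)
    have := norm_setIntegral_le_of_norm_le_const hTfin hbound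
    rw [Real.norm_eq_abs] at this
    refine le_trans this ?_
    have hvr : (volume T).toReal ≤ 2*δ := ENNReal.toReal_le_of_le_ofReal (by linarith) hTvol
    exact mul_le_mul_of_nonneg_left hvr hM0
  have hAtend : Filter.Tendsto A (nhdsWithin 0 (Set.Ioi 0)) (nhds (2*Real.pi*(P w).im)) := by
    rw [tendsto_iff_dist_tendsto_zero]
    refine squeeze_zero' (g := fun δ : ℝ => M * (2*δ))
      (Filter.Eventually.of_forall (fun δ => dist_nonneg)) ?_ ?_
    · filter_upwards [Ioo_mem_nhdsGT_of_mem (Set.mem_Ico.mpr ⟨le_refl 0, pi_pos⟩)] with δ hδ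
      rw [Real.dist_eq]
      exact hdiff δ hδ.1 hδ.2
    · have : Filter.Tendsto (fun δ : ℝ => M * (2*δ)) (nhds 0) (nhds (M * (2*0))) :=
        (continuous_const.mul (continuous_const.mul continuous_id)).tendsto 0
      simpa using this.mono_left nhdsWithin_le_nhds
  -- the key identity for each small positive δ
  have hkey : ∀ δ : ℝ, 0 < δ → δ < Real.pi →
      (∫ θ in {θ : ℝ | θ ∈ Set.Ioc 0 (2 * Real.pi) ∧
            δ < |Complex.arg (Complex.exp (θ * Complex.I) * (starRingEnd ℂ) w)|},
          (P (Complex.exp (θ * Complex.I))).re *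
            ((Complex.exp (θ * Complex.I) + w) / (Complex.exp (θ * Complex.I) - w)).im)
        = A δ := by
    intro δ hδ0 hδπ
    set F : ℝ → ℝ := fun θ => (P (Complex.exp ((θ:ℂ) * Complex.I))).re *
        ((Complex.exp ((θ:ℂ) * Complex.I) + w) / (Complex.exp ((θ:ℂ) * Complex.I) - w)).im
      with hFdef
    set C : Set ℝ := {θ : ℝ | δ < |Complex.arg (Complex.exp ((θ:ℂ) * Complex.I) *
        (starRingEnd ℂ) w)|} with hCdef
    have hCmeas : MeasurableSet C := by
      have hm : Measurable fun θ : ℝ =>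
          |Complex.arg (Complex.exp ((θ:ℂ) * Complex.I) * (starRingEnd ℂ) w)| :=
        (Complex.measurable_arg.comp
          (((Complex.continuous_ofReal.mul continuous_const).cexp.mul
            continuous_const).measurable)).abs
      exact measurableSet_lt measurable_const hm
    have hsetS : {θ : ℝ | θ ∈ Set.Ioc 0 (2 * Real.pi) ∧
        δ < |Complex.arg (Complex.exp ((θ:ℂ) * Complex.I) * (starRingEnd ℂ) w)|}
        = C ∩ Set.Ioc 0 (2 * Real.pi) := by
      ext θ
      simp only [Set.mem_setOf_eq, Set.mem_inter_iff, hCdef, and_comm]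
    -- step 1 : to an indicator integral over Ioc 0 2π
    have step1 : (∫ θ in {θ : ℝ | θ ∈ Set.Ioc 0 (2 * Real.pi) ∧
            δ < |Complex.arg (Complex.exp ((θ:ℂ) * Complex.I) * (starRingEnd ℂ) w)|}, F θ)
        = ∫ θ in Set.Ioc 0 (2 * Real.pi), C.indicator F θ := by
      rw [hsetS, ← Measure.restrict_restrict hCmeas, integral_indicator hCmeas]
    -- step 2 : shift the interval
    have hGper : Function.Periodic (C.indicator F) (2 * Real.pi) := by
      intro θ
      have harg : Complex.exp (((θ + 2*Real.pi : ℝ) : ℂ) * Complex.I)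
          = Complex.exp ((θ:ℂ) * Complex.I) := hper θ
      simp only [Set.indicator, hCdef, Set.mem_setOf_eq, hFdef, harg]
    have step2 : ∫ θ in Set.Ioc 0 (2 * Real.pi), C.indicator F θ
        = ∫ t in Set.Ioc (-Real.pi) Real.pi, C.indicator F (φ + t) := by
      rw [← intervalIntegral.integral_of_le (by linarith),
        ← intervalIntegral.integral_of_le (show -Real.pi ≤ Real.pi by linarith)]
      have e5 := (hGper.intervalIntegral_add_eq (φ + -Real.pi) 0).symm
      rw [zero_add] at e5
      rw [e5, show φ + -Real.pi + 2*Real.pi = φ + Real.pi by ring,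
        ← intervalIntegral.integral_comp_add_left (C.indicator F) φ]
    -- step 3 : pointwise identity on Ioc (-π) π
    have step3 : ∀ t ∈ Set.Ioc (-Real.pi) Real.pi,
        C.indicator F (φ + t) = Set.indicator {t : ℝ | δ < |t|} J t
          + (P w).re * Set.indicator {t : ℝ | δ < |t|} κ t := by
      intro t ht
      have hexpt : Complex.exp (((φ + t : ℝ) : ℂ) * Complex.I)
          = w * Complex.exp ((t:ℂ) * Complex.I) := by
        push_cast
        rw [add_mul, Complex.exp_add, hexp]
      have hargt : Complex.arg (Complex.exp (((φ + t : ℝ) : ℂ) * Complex.I)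
          * (starRingEnd ℂ) w) = t := by
        rw [hexpt, mul_comm w, mul_assoc, hwconj, mul_one, aux_arg_exp ht.1 ht.2]
      by_cases hc : δ < |t|
      · have htne : Complex.exp ((t:ℂ) * Complex.I) ≠ 1 := by
          intro he
          have := aux_arg_exp ht.1 ht.2
          rw [he, Complex.arg_one] at this
          rw [← this] at hc
          simp at hc
          linarith
        have hzw : Complex.exp (((φ + t : ℝ) : ℂ) * Complex.I) ≠ w := by
          rw [hexpt]
          intro he
          apply htne
          have : w * Complex.exp ((t:ℂ) * Complex.I) = w * 1 := by rw [mul_one]; exact he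
          exact mul_left_cancel₀ hw0 this
        have hmemC : (φ + t) ∈ C := by
          simp only [hCdef, Set.mem_setOf_eq, hargt]
          exact hc
        have hmemS : t ∈ {t : ℝ | δ < |t|} := hc
        rw [Set.indicator_of_mem hmemC F, Set.indicator_of_mem hmemS J,
          Set.indicator_of_mem hmemS κ]
        set z := Complex.exp (((φ + t : ℝ) : ℂ) * Complex.I) with hzdef
        have habsz : ‖z‖ = 1 := Complex.norm_exp_ofReal_mul_I _
        have hker : (z + w) / (z - w)
            = (Complex.exp ((t:ℂ) * Complex.I) + 1) / (Complex.exp ((t:ℂ) * Complex.I) - 1) := by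
          rw [hexpt,
            show w * Complex.exp ((t:ℂ) * Complex.I) + w
              = w * (Complex.exp ((t:ℂ) * Complex.I) + 1) by ring,
            show w * Complex.exp ((t:ℂ) * Complex.I) - w
              = w * (Complex.exp ((t:ℂ) * Complex.I) - 1) by ring,
            mul_div_mul_left _ _ hw0]
        have hre0 : ((z + w) / (z - w)).re = 0 := aux_re_ker z w habsz hw1
        have hJt : J t = ((P z).re - (P w).re) * ((z + w) / (z - w)).im := by
          simp only [hJdef, hh]
          rw [dslope_of_ne P hzw, slope_def_field,
            show (P z - P w) / (z - w) * (z + w) = (P z - P w) * ((z + w)/(z - w)) by ring,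
            Complex.mul_im, hre0, mul_zero, add_zero, Complex.sub_re]
        have hκt : κ t = ((z + w) / (z - w)).im := by rw [hκdef]; simp only; rw [hker]
        show F (φ + t) = _
        rw [hFdef]
        simp only
        rw [hJt, hκt]
        ring
      · have hnotC : (φ + t) ∉ C := by
          simp only [hCdef, Set.mem_setOf_eq, hargt]
          exact hc
        have hnotS : t ∉ {t : ℝ | δ < |t|} := hc
        rw [Set.indicator_of_notMem hnotC F, Set.indicator_of_notMem hnotS J,
          Set.indicator_of_notMem hnotS κ, mul_zero, add_zero]
    -- integrability of the kernel part
    have hκmeas : Measurable κ := by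
      have hm1 : Measurable fun t : ℝ => Complex.exp ((t:ℂ) * Complex.I) :=
        (Complex.continuous_ofReal.mul continuous_const).cexp.measurable
      exact Complex.measurable_im.comp ((hm1.add measurable_const).div
        (hm1.sub measurable_const))
    have hcosδ : 0 < 2 - 2 * Real.cos δ := by
      have := aux_cos_lt_one hδ0 hδπ.le
      linarith
    set Mδ : ℝ := 2 / Real.sqrt (2 - 2 * Real.cos δ) with hMδdef
    have hintκ : IntegrableOn (Set.indicator {t : ℝ | δ < |t|} κ)
        (Set.Ioc (-Real.pi) Real.pi) := by
      refine Integrable.mono' (g := fun _ => Mδ) (integrableOn_const ?_)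
        ((hκmeas.indicator (hmeasS δ)).aestronglyMeasurable) ?_
      · rw [Real.volume_Ioc]; simp
      · filter_upwards [ae_restrict_mem measurableSet_Ioc] with t ht
        by_cases hc : δ < |t|
        · rw [Set.indicator_of_mem (show t ∈ {t : ℝ | δ < |t|} from hc) κ]
          have habs : ‖Complex.exp ((t:ℂ) * Complex.I)‖ = 1 :=
            Complex.norm_exp_ofReal_mul_I _
          have hargeq : Complex.arg (Complex.exp ((t:ℂ) * Complex.I)) = t :=
            aux_arg_exp ht.1 ht.2
          have hlb := aux_normSq_lb (Complex.exp ((t:ℂ) * Complex.I)) habs δ hδ0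
            (by rw [hargeq]; exact hc.le)
          have hden : Real.sqrt (2 - 2 * Real.cos δ)
              ≤ ‖Complex.exp ((t:ℂ) * Complex.I) - 1‖ := by
            rw [← Complex.sq_norm] at hlb
            have := Real.sqrt_le_sqrt hlb
            rwa [Real.sqrt_sq (norm_nonneg _)] at this
          have hnum : ‖Complex.exp ((t:ℂ) * Complex.I) + 1‖ ≤ 2 := by
            refine le_trans (norm_add_le _ _) ?_
            rw [habs, norm_one]
            norm_num
          have hsqrtpos : 0 < Real.sqrt (2 - 2 * Real.cos δ) := Real.sqrt_pos.2 hcosδ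
          rw [Real.norm_eq_abs]
          calc |κ t| ≤ ‖(Complex.exp ((t:ℂ) * Complex.I) + 1) /
              (Complex.exp ((t:ℂ) * Complex.I) - 1)‖ := by
                rw [hκdef]; exact Complex.abs_im_le_norm _
            _ = ‖Complex.exp ((t:ℂ) * Complex.I) + 1‖ /
                ‖Complex.exp ((t:ℂ) * Complex.I) - 1‖ := norm_div _ _
            _ ≤ Mδ := div_le_div₀ (by norm_num) hnum hsqrtpos hden
        · rw [Set.indicator_of_notMem (show t ∉ {t : ℝ | δ < |t|} from hc) κ]
          simp only [norm_zero]
          positivity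
    have hintJind : IntegrableOn (Set.indicator {t : ℝ | δ < |t|} J)
        (Set.Ioc (-Real.pi) Real.pi) := hJIoc.indicator (hmeasS δ)
    -- the odd kernel part integrates to zero
    have hodd : ∫ t in Set.Ioc (-Real.pi) Real.pi,
        Set.indicator {t : ℝ | δ < |t|} κ t = 0 := by
      set g : ℝ → ℝ := Set.indicator {t : ℝ | δ < |t|} κ with hgdef
      have hgodd : ∀ t, g (-t) = - g t := by
        intro t
        by_cases hc : δ < |t|
        · rw [hgdef, Set.indicator_of_mem (show -t ∈ {t : ℝ | δ < |t|} by simpa using hc) κ,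
            Set.indicator_of_mem (show t ∈ {t : ℝ | δ < |t|} from hc) κ]
          exact aux_kappa_odd t
        · rw [hgdef, Set.indicator_of_notMem (show -t ∉ {t : ℝ | δ < |t|} by simpa using hc) κ,
            Set.indicator_of_notMem (show t ∉ {t : ℝ | δ < |t|} from hc) κ, neg_zero]
      have hii1 : IntervalIntegrable g volume (-Real.pi) 0 := by
        constructor
        · exact hintκ.mono_set (Set.Ioc_subset_Ioc (le_refl _) pi_pos.le)
        · rw [Set.Ioc_eq_empty (by linarith)]
          exact integrableOn_empty
      have hii2 : IntervalIntegrable g volume 0 Real.pi := by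
        constructor
        · exact hintκ.mono_set (Set.Ioc_subset_Ioc (by linarith) (le_refl _))
        · rw [Set.Ioc_eq_empty (by linarith)]
          exact integrableOn_empty
      have hneg : ∫ t in (-Real.pi)..(0:ℝ), g t = - ∫ t in (0:ℝ)..Real.pi, g t := by
        calc ∫ t in (-Real.pi)..(0:ℝ), g t = ∫ t in (-Real.pi)..(-0:ℝ), g t := by norm_num
          _ = ∫ x in (0:ℝ)..Real.pi, g (-x) := (intervalIntegral.integral_comp_neg g).symm
          _ = ∫ x in (0:ℝ)..Real.pi, - g x := by simp only [hgodd]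
          _ = - ∫ x in (0:ℝ)..Real.pi, g x := intervalIntegral.integral_neg
      rw [← intervalIntegral.integral_of_le (show -Real.pi ≤ Real.pi by linarith),
        ← intervalIntegral.integral_add_adjacent_intervals hii1 hii2, hneg]
      ring
    -- assemble
    rw [step1, step2]
    have step4 : ∫ t in Set.Ioc (-Real.pi) Real.pi, C.indicator F (φ + t)
        = ∫ t in Set.Ioc (-Real.pi) Real.pi, (Set.indicator {t : ℝ | δ < |t|} J t
          + (P w).re * Set.indicator {t : ℝ | δ < |t|} κ t) :=
      setIntegral_congr_fun measurableSet_Ioc step3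
    rw [step4, integral_add hintJind (hintκ.const_mul _), integral_const_mul, hodd,
      mul_zero, add_zero, hAdef]
  -- conclusion
  have hfin : Filter.Tendsto (fun δ : ℝ => (1 / (2 * Real.pi)) * A δ)
      (nhdsWithin 0 (Set.Ioi 0)) (nhds ((P w).im)) := by
    have := hAtend.const_mul (1 / (2 * Real.pi))
    have heq : (1 / (2 * Real.pi)) * (2*Real.pi*(P w).im) = (P w).im := by
      field_simp
    rwa [heq] at this
  refine hfin.congr' ?_
  filter_upwards [Ioo_mem_nhdsGT_of_mem (Set.mem_Ico.mpr ⟨le_refl 0, pi_pos⟩)] with δ hδ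
  rw [hkey δ hδ.1 hδ.2]
end
end

section
/- Let m > n ≥ 1 be integers and let w' ∈ 𝕌. Then (1/2π) ∫_𝕌 [ Re(wᵐ) · Re( ((w+w')/(w'−w))·((w')ⁿ − wⁿ) ) − Re(wⁿ) · Re( ((w+w')/(w'−w))·((w')ᵐ − wᵐ) ) ] dλ(w) = −Re( (w')^{m−n} ). (This is the identity A(p,q) = −sgn(p,q)(pq + p̃q̃) for the antisymmetric bilinear form A(p,q) = (1/2π)(pV_q − qV_p) applied to the Fourier modes p(e^{iθ}) = cos(mθ), q(e^{iθ}) = cos(nθ) with m > n.) -/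
noncomputable section

namespace Aux13

open Finset intervalIntegral

/-- `E k θ = exp(i k θ)`. -/
def E (k : ℤ) (θ : ℝ) : ℂ := Complex.exp (k * θ * Complex.I)

lemma E_cont (k : ℤ) : Continuous (E k) :=
  Complex.continuous_exp.comp ((continuous_const.mul Complex.continuous_ofReal).mul continuous_const)

lemma E_mul' (a b c : ℤ) (h : a + b = c) (θ : ℝ) : E a θ * E b θ = E c θ := by
  rw [E, E, E, ← Complex.exp_add, ← h]
  congr 1
  push_cast
  ring

lemma E_integral (k : ℤ) :
    ∫ θ in (0:ℝ)..(2*Real.pi), E k θ = if k = 0 then ((2*Real.pi : ℝ) : ℂ) else 0 := by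
  split_ifs with h
  · subst h
    simp only [E, Int.cast_zero, zero_mul, Complex.exp_zero]
    simp
  · have hc : (k:ℂ) * Complex.I ≠ 0 := by
      refine mul_ne_zero ?_ Complex.I_ne_zero
      exact_mod_cast (Int.cast_ne_zero (α := ℂ)).mpr h
    have hcg : Set.EqOn (E k) (fun θ : ℝ => Complex.exp ((k * Complex.I) * θ)) (Set.uIcc 0 (2*Real.pi)) := by
      intro x _
      simp only [E]
      ring_nf
    rw [intervalIntegral.integral_congr hcg, integral_exp_mul_complex hc]
    have h2 : (k:ℂ) * Complex.I * ((2*Real.pi : ℝ):ℂ) = (k:ℤ) * (2 * (Real.pi:ℂ) * Complex.I) := by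
      push_cast; ring
    rw [h2, Complex.exp_int_mul_two_pi_mul_I]
    simp

lemma int_cE (c : ℂ) (k : ℤ) :
    ∫ θ in (0:ℝ)..(2*Real.pi), c * E k θ = if k = 0 then c * ((2*Real.pi:ℝ):ℂ) else 0 := by
  rw [intervalIntegral.integral_const_mul, E_integral]
  split_ifs <;> simp

/-- `T w' k θ = ((w+w')/(w'-w))(w'^k - w^k)` smoothly extended, `w = e^{iθ}`. -/
def T (w' : ℂ) (k : ℕ) (θ : ℝ) : ℂ :=
  ∑ i ∈ range k, (w'^i * E ((k:ℤ) - i) θ + w'^(i+1) * E ((k:ℤ) - 1 - i) θ)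

lemma T_cont (w' : ℂ) (k : ℕ) : Continuous (T w' k) :=
  continuous_finset_sum _ fun _ _ =>
    (continuous_const.mul (E_cont _)).add (continuous_const.mul (E_cont _))

lemma E_nat (j : ℕ) (θ : ℝ) : (Complex.exp (θ * Complex.I))^j = E j θ := by
  rw [E, ← Complex.exp_nat_mul]
  congr 1
  push_cast
  ring

lemma key_expand (w' : ℂ) (k : ℕ) (θ : ℝ) (hne : Complex.exp (θ * Complex.I) ≠ w') :
    ((Complex.exp (θ*Complex.I) + w') / (w' - Complex.exp (θ*Complex.I))) *
      (w'^k - (Complex.exp (θ*Complex.I))^k) = T w' k θ := by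
  set w := Complex.exp (θ*Complex.I) with hw
  have hs : w' - w ≠ 0 := sub_ne_zero.mpr (Ne.symm hne)
  have geom : (∑ i ∈ range k, w'^i * w^(k-1-i)) * (w' - w) = w'^k - w^k := geom_sum₂_mul w' w k
  rw [← geom]
  have hfs : (w + w') / (w' - w) * ((∑ i ∈ range k, w'^i * w^(k-1-i)) * (w' - w))
      = (w + w') * ∑ i ∈ range k, w'^i * w^(k-1-i) := by
    field_simp
  rw [hfs, Finset.mul_sum, T]
  refine Finset.sum_congr rfl fun i hi => ?_
  have hik : i < k := Finset.mem_range.mp hi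
  have c1 : ((k:ℤ) - i) = ((k - i : ℕ) : ℤ) := by omega
  have c2 : ((k:ℤ) - 1 - i) = ((k - 1 - i : ℕ) : ℤ) := by omega
  rw [c1, c2, ← E_nat, ← E_nat, ← hw]
  have h1 : w ^ (k-i) = w * w^(k-1-i) := by
    rw [← pow_succ']
    congr 1
    omega
  rw [h1]
  ring

lemma prod_expand (w' : ℂ) (p k : ℕ) (θ : ℝ) :
    (E p θ + E (-(p:ℤ)) θ) * T w' k θ = ∑ i ∈ range k,
      (w'^i * E ((p:ℤ)+k-i) θ + w'^i * E ((k:ℤ)-i-p) θ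
        + w'^(i+1) * E ((p:ℤ)+k-1-i) θ + w'^(i+1) * E ((k:ℤ)-1-i-p) θ) := by
  rw [T, Finset.mul_sum]
  refine Finset.sum_congr rfl fun i _ => ?_
  have expand : (E (p:ℤ) θ + E (-(p:ℤ)) θ) * (w'^i * E ((k:ℤ)-i) θ + w'^(i+1) * E ((k:ℤ)-1-i) θ)
      = w'^i * (E (p:ℤ) θ * E ((k:ℤ)-i) θ) + w'^i * (E (-(p:ℤ)) θ * E ((k:ℤ)-i) θ)
        + w'^(i+1) * (E (p:ℤ) θ * E ((k:ℤ)-1-i) θ)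
        + w'^(i+1) * (E (-(p:ℤ)) θ * E ((k:ℤ)-1-i) θ) := by ring
  rw [expand, E_mul' (p:ℤ) ((k:ℤ)-i) ((p:ℤ)+k-i) (by ring) θ,
    E_mul' (-(p:ℤ)) ((k:ℤ)-i) ((k:ℤ)-i-p) (by ring) θ,
    E_mul' (p:ℤ) ((k:ℤ)-1-i) ((p:ℤ)+k-1-i) (by ring) θ,
    E_mul' (-(p:ℤ)) ((k:ℤ)-1-i) ((k:ℤ)-1-i-p) (by ring) θ]

lemma intg_cE (c : ℂ) (k : ℤ) : IntervalIntegrable (fun θ => c * E k θ)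
    MeasureTheory.volume 0 (2*Real.pi) :=
  (continuous_const.mul (E_cont k)).intervalIntegrable _ _

lemma int_prod (w' : ℂ) (p k : ℕ) :
    ∫ θ in (0:ℝ)..(2*Real.pi), (E p θ + E (-(p:ℤ)) θ) * T w' k θ
    = ∑ i ∈ range k,
      ((if (p:ℤ)+k-i = 0 then w'^i * ((2*Real.pi:ℝ):ℂ) else 0)
        + (if (k:ℤ)-i-p = 0 then w'^i * ((2*Real.pi:ℝ):ℂ) else 0)
        + (if (p:ℤ)+k-1-i = 0 then w'^(i+1) * ((2*Real.pi:ℝ):ℂ) else 0)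
        + (if (k:ℤ)-1-i-p = 0 then w'^(i+1) * ((2*Real.pi:ℝ):ℂ) else 0)) := by
  rw [intervalIntegral.integral_congr (g := fun θ => ∑ i ∈ range k,
      (w'^i * E ((p:ℤ)+k-i) θ + w'^i * E ((k:ℤ)-i-p) θ
        + w'^(i+1) * E ((p:ℤ)+k-1-i) θ + w'^(i+1) * E ((k:ℤ)-1-i-p) θ))
      (fun θ _ => prod_expand w' p k θ)]
  rw [intervalIntegral.integral_finset_sum (fun i _ =>
    (((intg_cE _ _).add (intg_cE _ _)).add (intg_cE _ _)).add (intg_cE _ _))]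
  refine Finset.sum_congr rfl fun i _ => ?_
  rw [intervalIntegral.integral_add (((intg_cE _ _).add (intg_cE _ _)).add (intg_cE _ _)) (intg_cE _ _),
    intervalIntegral.integral_add ((intg_cE _ _).add (intg_cE _ _)) (intg_cE _ _),
    intervalIntegral.integral_add (intg_cE _ _) (intg_cE _ _),
    int_cE, int_cE, int_cE, int_cE]

lemma case1 (w' : ℂ) (m n : ℕ) (hmn : n < m) :
    ∫ θ in (0:ℝ)..(2*Real.pi), (E m θ + E (-(m:ℤ)) θ) * T w' n θ = 0 := by
  rw [int_prod]
  refine Finset.sum_eq_zero fun i hi => ?_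
  have him : i < n := Finset.mem_range.mp hi
  have c1 : ¬((m:ℤ)+n-i = 0) := by omega
  have c2 : ¬((n:ℤ)-i-m = 0) := by omega
  have c3 : ¬((m:ℤ)+n-1-i = 0) := by omega
  have c4 : ¬((n:ℤ)-1-i-m = 0) := by omega
  simp [c1, c2, c3, c4]

lemma case2 (w' : ℂ) (m n : ℕ) (hn : 1 ≤ n) (hmn : n < m) :
    ∫ θ in (0:ℝ)..(2*Real.pi), (E n θ + E (-(n:ℤ)) θ) * T w' m θ
      = w'^(m-n) * ((2*Real.pi:ℝ):ℂ) + w'^(m-n) * ((2*Real.pi:ℝ):ℂ) := by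
  rw [int_prod]
  have hcong : ∀ i ∈ range m,
      ((if (n:ℤ)+m-i = 0 then w'^i * ((2*Real.pi:ℝ):ℂ) else 0)
        + (if (m:ℤ)-i-n = 0 then w'^i * ((2*Real.pi:ℝ):ℂ) else 0)
        + (if (n:ℤ)+m-1-i = 0 then w'^(i+1) * ((2*Real.pi:ℝ):ℂ) else 0)
        + (if (m:ℤ)-1-i-n = 0 then w'^(i+1) * ((2*Real.pi:ℝ):ℂ) else 0))
      = (if i = m-n then w'^(m-n) * ((2*Real.pi:ℝ):ℂ) else 0)
        + (if i = m-n-1 then w'^(m-n) * ((2*Real.pi:ℝ):ℂ) else 0) := by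
    intro i hi
    have him : i < m := Finset.mem_range.mp hi
    have c1 : ¬((n:ℤ)+m-i = 0) := by omega
    have c3 : ¬((n:ℤ)+m-1-i = 0) := by omega
    rw [if_neg c1, if_neg c3]
    have h2 : ((m:ℤ)-i-n = 0) ↔ i = m-n := by omega
    have h4 : ((m:ℤ)-1-i-n = 0) ↔ i = m-n-1 := by omega
    simp only [h2, h4]
    split_ifs with hA hB
    · exfalso; omega
    · have : i = m - n := hA
      rw [this]
      ring
    · have hi1 : i + 1 = m - n := by omega
      rw [hi1]
      ring
    · ring
  rw [Finset.sum_congr rfl hcong, Finset.sum_add_distrib,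
    Finset.sum_ite_eq' (range m) (m-n), Finset.sum_ite_eq' (range m) (m-n-1)]
  rw [if_pos (Finset.mem_range.mpr (by omega)), if_pos (Finset.mem_range.mpr (by omega))]

lemma half_cos (p : ℕ) (θ : ℝ) :
    (1/2 : ℂ) * (E p θ + E (-(p:ℤ)) θ) = ((Real.cos (p*θ) : ℝ) : ℂ) := by
  have e1 : E (p:ℤ) θ = Complex.cos ((p*θ:ℝ):ℂ) + Complex.sin ((p*θ:ℝ):ℂ) * Complex.I := by
    rw [E, show ((p:ℤ):ℂ) * θ * Complex.I = ((p*θ:ℝ):ℂ) * Complex.I by push_cast; ring,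
      Complex.exp_mul_I]
  have e2 : E (-(p:ℤ)) θ = Complex.cos ((p*θ:ℝ):ℂ) - Complex.sin ((p*θ:ℝ):ℂ) * Complex.I := by
    rw [E]
    rw [show (((-(p:ℤ)):ℤ):ℂ) * θ * Complex.I = ((-(p*θ):ℝ):ℂ) * Complex.I by push_cast; ring,
      Complex.exp_mul_I]
    push_cast
    rw [Complex.cos_neg, Complex.sin_neg]
    ring
  rw [e1, e2, Complex.ofReal_cos]
  ring

lemma re_pow (p : ℕ) (θ : ℝ) :
    ((Complex.exp (θ * Complex.I))^p).re = Real.cos (p*θ) := by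
  rw [← Complex.exp_nat_mul,
    show (p:ℂ) * (θ * Complex.I) = ((p*θ:ℝ):ℂ) * Complex.I by push_cast; ring,
    Complex.exp_ofReal_mul_I_re]

end Aux13

open Aux13 Finset intervalIntegral in
/-- The identity `A(p,q) = −sgn(p,q)(pq + p̃q̃)` for the antisymmetric form
`A(p,q) = (1/2π)(pV_q − qV_p)` on the Fourier modes `p(e^{iθ}) = cos(mθ)`,
`q(e^{iθ}) = cos(nθ)` with `m > n ≥ 1`:
`(1/2π) ∫_𝕌 [Re(wᵐ) V_{zⁿ}(w,w') − Re(wⁿ) V_{zᵐ}(w,w')] dλ(w) = −Re((w')^{m−n})`. -/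
theorem statement13 (m n : ℕ) (hn : 1 ≤ n) (hmn : n < m)
    (w' : ℂ) (hw' : w' ∈ unitCircle) :
    (1 / (2 * Real.pi)) * ∫ θ in (0 : ℝ)..(2 * Real.pi),
        ((Complex.exp (θ * Complex.I)) ^ m).re *
            (((Complex.exp (θ * Complex.I) + w') / (w' - Complex.exp (θ * Complex.I))) *
              (w' ^ n - (Complex.exp (θ * Complex.I)) ^ n)).re -
          ((Complex.exp (θ * Complex.I)) ^ n).re *
            (((Complex.exp (θ * Complex.I) + w') / (w' - Complex.exp (θ * Complex.I))) *
              (w' ^ m - (Complex.exp (θ * Complex.I)) ^ m)).re =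
      -(w' ^ (m - n)).re := by
  -- the complex-valued version of the integrand
  set H : ℝ → ℂ := fun θ =>
    (1/2 : ℂ) * (E m θ + E (-(m:ℤ)) θ) * T w' n θ
      - (1/2 : ℂ) * (E n θ + E (-(n:ℤ)) θ) * T w' m θ with hH
  have hHcont : Continuous H := by
    apply Continuous.sub <;>
      exact (continuous_const.mul ((E_cont _).add (E_cont _))).mul (T_cont _ _)
  -- a.e. equality of integrands
  have hae : ∀ᵐ θ : ℝ, θ ∈ Set.uIoc (0:ℝ) (2*Real.pi) →
      (((Complex.exp (θ * Complex.I)) ^ m).re *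
            (((Complex.exp (θ * Complex.I) + w') / (w' - Complex.exp (θ * Complex.I))) *
              (w' ^ n - (Complex.exp (θ * Complex.I)) ^ n)).re -
          ((Complex.exp (θ * Complex.I)) ^ n).re *
            (((Complex.exp (θ * Complex.I) + w') / (w' - Complex.exp (θ * Complex.I))) *
              (w' ^ m - (Complex.exp (θ * Complex.I)) ^ m)).re)
        = (H θ).re := by
    have hw1 : ‖w'‖ = 1 := by
      simpa [unitCircle, Complex.dist_eq] using hw'
    have hw0 : w' = Complex.exp ((Complex.arg w' : ℝ) * Complex.I) := by
      conv_lhs => rw [← Complex.norm_mul_exp_arg_mul_I w']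
      rw [hw1]
      simp
    set θ0 := Complex.arg w'
    have hsub : {θ : ℝ | Complex.exp (θ * Complex.I) = w'} ⊆
        Set.range (fun k : ℤ => θ0 + k * (2*Real.pi)) := by
      intro θ hθ
      simp only [Set.mem_setOf_eq] at hθ
      rw [hw0] at hθ
      rw [Complex.exp_eq_exp_iff_exists_int] at hθ
      obtain ⟨k, hk⟩ := hθ
      refine ⟨k, ?_⟩
      have him := congrArg Complex.im hk
      simp [Complex.mul_im, Complex.add_im, Complex.mul_re] at him
      simp only []
      linarith [him]
    have hnull : MeasureTheory.volume {θ : ℝ | Complex.exp (θ * Complex.I) = w'} = 0 :=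
      MeasureTheory.measure_mono_null hsub (Set.Countable.measure_zero (Set.countable_range _) _)
    have hae0 : ∀ᵐ θ : ℝ, Complex.exp (θ * Complex.I) ≠ w' :=
      (MeasureTheory.measure_eq_zero_iff_ae_notMem.mp hnull)
    filter_upwards [hae0] with θ hne _
    rw [key_expand w' n θ hne, key_expand w' m θ hne, re_pow, re_pow]
    have h1 := half_cos m θ
    have h2 := half_cos n θ
    rw [hH]
    simp only []
    rw [h1, h2]
    simp only [Complex.sub_re, Complex.re_ofReal_mul]
  rw [intervalIntegral.integral_congr_ae hae]
  -- pass to the complex integral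
  have hre : ∫ θ in (0:ℝ)..(2*Real.pi), (H θ).re
      = (∫ θ in (0:ℝ)..(2*Real.pi), H θ).re := by
    rw [← Complex.reCLM_apply, ← ContinuousLinearMap.intervalIntegral_comp_comm _
      (hHcont.intervalIntegrable _ _)]
    rfl
  rw [hre]
  have hHval : ∫ θ in (0:ℝ)..(2*Real.pi), H θ = -(((2*Real.pi:ℝ):ℂ) * w'^(m-n)) := by
    have hHeq : H = fun θ => (1/2 : ℂ) * ((E m θ + E (-(m:ℤ)) θ) * T w' n θ)
        - (1/2 : ℂ) * ((E n θ + E (-(n:ℤ)) θ) * T w' m θ) := by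
      funext θ; rw [hH]; ring
    rw [hHeq, intervalIntegral.integral_sub (f := fun θ => (1/2 : ℂ) * ((E m θ + E (-(m:ℤ)) θ) * T w' n θ))
        (g := fun θ => (1/2 : ℂ) * ((E n θ + E (-(n:ℤ)) θ) * T w' m θ))
        ((continuous_const.mul (((E_cont _).add (E_cont _)).mul (T_cont _ _))).intervalIntegrable _ _)
        ((continuous_const.mul (((E_cont _).add (E_cont _)).mul (T_cont _ _))).intervalIntegrable _ _),
      intervalIntegral.integral_const_mul, intervalIntegral.integral_const_mul,
      case1 w' m n hmn, case2 w' m n hn hmn]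
    ring
  rw [hHval]
  have hre2 : (-(((2*Real.pi:ℝ):ℂ) * w'^(m-n))).re = -(2*Real.pi * (w'^(m-n)).re) := by
    simp [Complex.neg_re, Complex.re_ofReal_mul]
  rw [hre2]
  have hpi : (2*Real.pi) ≠ 0 := by positivity
  field_simp
end
end

section
/- Let (X, Y, W, Z) be a centered (jointly) Gaussian random vector in ℝ⁴. Then E( W·Z · exp(X − E(X²)/2) · exp(Y − E(Y²)/2) ) = ( E(WZ) + (E(WX) + E(WY))·(E(ZX) + E(ZY)) ) · exp(E(XY)). -/
noncomputable section

open MeasureTheory ProbabilityTheory NNReal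

section Auxiliary

open ENNReal Real



-- rewrite gaussianReal as withDensity of an NNReal density
lemma gaussianReal_eq_withDensity (v : ℝ≥0) (hv : v ≠ 0) :
    gaussianReal 0 v = volume.withDensity (fun x => ((gaussianPDFReal 0 v x).toNNReal : ℝ≥0∞)) := by
  rw [gaussianReal_of_var_ne_zero 0 hv]
  rfl

lemma integral_gaussianReal (v : ℝ≥0) (hv : v ≠ 0) (g : ℝ → ℝ) :
    ∫ x, g x ∂(gaussianReal 0 v) = ∫ x, gaussianPDFReal 0 v x * g x := by
  rw [gaussianReal_eq_withDensity v hv,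
    integral_withDensity_eq_integral_smul ((measurable_gaussianPDFReal 0 v).real_toNNReal) g]
  congr 1 with x
  simp [NNReal.smul_def, Real.coe_toNNReal _ (gaussianPDFReal_nonneg 0 v x)]

lemma integrable_gaussianReal_iff (v : ℝ≥0) (hv : v ≠ 0) (g : ℝ → ℝ) :
    Integrable g (gaussianReal 0 v) ↔ Integrable (fun x => gaussianPDFReal 0 v x * g x) := by
  rw [gaussianReal_eq_withDensity v hv,
    integrable_withDensity_iff_integrable_smul ((measurable_gaussianPDFReal 0 v).real_toNNReal)]
  constructor <;> intro h <;> apply h.congr <;>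
    exact Filter.Eventually.of_forall fun x => by
      simp [NNReal.smul_def, Real.coe_toNNReal _ (gaussianPDFReal_nonneg 0 v x)]

-- assume p1 lemmas via copies
lemma gaussianPDFReal_mul_exp (v : ℝ≥0) (hv : v ≠ 0) (x : ℝ) :
    gaussianPDFReal 0 v x * Real.exp x = Real.exp (v/2) * gaussianPDFReal v v x := by
  have hv' : (v:ℝ) ≠ 0 := by exact_mod_cast hv
  simp only [gaussianPDFReal, sub_zero]
  have h : -x^2/(2*(v:ℝ)) + x = (v:ℝ)/2 + -(x - (v:ℝ))^2/(2*(v:ℝ)) := by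
    field_simp
    ring
  calc (√(2*π*(v:ℝ)))⁻¹ * rexp (-x^2/(2*(v:ℝ))) * rexp x
      = (√(2*π*(v:ℝ)))⁻¹ * rexp (-x^2/(2*(v:ℝ)) + x) := by rw [mul_assoc, Real.exp_add]
    _ = (√(2*π*(v:ℝ)))⁻¹ * (rexp ((v:ℝ)/2) * rexp (-(x-(v:ℝ))^2/(2*(v:ℝ)))) := by
        rw [h, Real.exp_add]
    _ = rexp ((v:ℝ)/2) * ((√(2*π*(v:ℝ)))⁻¹ * rexp (-(x-(v:ℝ))^2/(2*(v:ℝ)))) := by ring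

lemma integrable_exp_gaussianReal (v : ℝ≥0) :
    Integrable (fun x => Real.exp x) (gaussianReal 0 v) := by
  rcases eq_or_ne v 0 with rfl | hv
  · rw [gaussianReal_zero_var]
    refine ⟨(Real.continuous_exp.measurable).aestronglyMeasurable, ?_⟩
    rw [HasFiniteIntegral, lintegral_dirac' _ (by fun_prop)]
    exact ENNReal.coe_lt_top
  · rw [integrable_gaussianReal_iff v hv]
    refine ((integrable_gaussianPDFReal v v).const_mul (Real.exp (v/2))).congr ?_
    exact Filter.Eventually.of_forall fun x => (gaussianPDFReal_mul_exp v hv x).symm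

lemma integral_exp_gaussianReal (v : ℝ≥0) :
    ∫ x, Real.exp x ∂(gaussianReal 0 v) = Real.exp (v/2) := by
  rcases eq_or_ne v 0 with rfl | hv
  · rw [gaussianReal_zero_var, integral_dirac]
    simp
  · rw [integral_gaussianReal v hv]
    simp_rw [fun x => gaussianPDFReal_mul_exp v hv x]
    rw [integral_const_mul, integral_gaussianPDFReal_eq_one v hv, mul_one]

lemma integrable_sq_mul_exp_neg_mul_sq {b : ℝ} (hb : 0 < b) :
    Integrable fun x : ℝ => x^2 * rexp (-b * x^2) := by
  have h := integrable_rpow_mul_exp_neg_mul_sq hb (s := 2) (by norm_num)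
  refine h.congr (Filter.Eventually.of_forall fun x => ?_)
  norm_num

lemma integral_sq_mul_exp_neg_mul_sq {b : ℝ} (hb : 0 < b) :
    ∫ x : ℝ, x^2 * rexp (-b * x^2) = √(π/b) / (2*b) := by
  have hb' : (2*b) ≠ 0 := by positivity
  set u : ℝ → ℝ := fun x => x with hu_def
  set u' : ℝ → ℝ := fun _ => 1 with hu'_def
  set w : ℝ → ℝ := fun x => -(2*b)⁻¹ * rexp (-b * x^2) with hw_def
  set w' : ℝ → ℝ := fun x => x * rexp (-b * x^2) with hw'_def
  have hu : ∀ x, HasDerivAt u (u' x) x := fun x => hasDerivAt_id x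
  have hw : ∀ x, HasDerivAt w (w' x) x := by
    intro x
    have h1 : HasDerivAt (fun y : ℝ => -b * y^2) (-b * (2*x^1)) x :=
      (hasDerivAt_pow 2 x).const_mul (-b)
    have h2 := (h1.exp).const_mul (-(2*b)⁻¹)
    refine h2.congr_deriv ?_
    field_simp
    simp only [hw'_def]
    ring
  have huw' : Integrable (u * w') := by
    refine (integrable_sq_mul_exp_neg_mul_sq hb).congr (.of_forall fun x => ?_)
    simp only [Pi.mul_apply, hu_def, hw'_def]
    ring
  have hu'w : Integrable (u' * w) := by
    refine ((integrable_exp_neg_mul_sq hb).const_mul (-(2*b)⁻¹)).congr (.of_forall fun x => ?_)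
    simp only [Pi.mul_apply, hu'_def, hw_def]
    ring
  have huw : Integrable (u * w) := by
    refine ((integrable_mul_exp_neg_mul_sq hb).const_mul (-(2*b)⁻¹)).congr (.of_forall fun x => ?_)
    simp only [Pi.mul_apply, hu_def, hw_def]
    ring
  have key := integral_mul_deriv_eq_deriv_mul_of_integrable (fun x _ => hu x) (fun x _ => hw x) huw' hu'w huw
  have hL : ∫ x : ℝ, u x * w' x = ∫ x : ℝ, x^2 * rexp (-b * x^2) := by
    congr 1 with x
    simp only [hu_def, hw'_def]
    ring
  have hR : ∫ x : ℝ, u' x * w x = -(2*b)⁻¹ * √(π/b) := by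
    simp only [hu'_def, hw_def, one_mul]
    rw [integral_const_mul]
    congr 1
    exact integral_gaussian b
  rw [hL, hR] at key
  rw [key]
  field_simp

lemma integrable_sq_gaussianReal (v : ℝ≥0) :
    Integrable (fun x : ℝ => x^2) (gaussianReal 0 v) := by
  rcases eq_or_ne v 0 with rfl | hv
  · rw [gaussianReal_zero_var]
    refine ⟨(by fun_prop : Measurable fun x : ℝ => x^2).aestronglyMeasurable, ?_⟩
    rw [HasFiniteIntegral, lintegral_dirac' _ (by fun_prop)]
    exact ENNReal.coe_lt_top
  · rw [integrable_gaussianReal_iff v hv]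
    have hv' : (0:ℝ) < (2*(v:ℝ))⁻¹ := by positivity
    refine ((integrable_sq_mul_exp_neg_mul_sq hv').const_mul ((√(2*π*(v:ℝ)))⁻¹)).congr
      (.of_forall fun x => ?_)
    simp only [gaussianPDFReal, sub_zero]
    rw [show -x^2/(2*(v:ℝ)) = -(2*(v:ℝ))⁻¹ * x^2 by ring]
    ring

lemma integral_sq_gaussianReal (v : ℝ≥0) :
    ∫ x, x^2 ∂(gaussianReal 0 v) = v := by
  rcases eq_or_ne v 0 with rfl | hv
  · rw [gaussianReal_zero_var, integral_dirac]
    simp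
  · have hvpos : (0:ℝ) < (v:ℝ) := by positivity
    rw [integral_gaussianReal v hv]
    have hb : (0:ℝ) < (2*(v:ℝ))⁻¹ := by positivity
    have heq : ∀ x : ℝ, gaussianPDFReal 0 v x * x^2
        = (√(2*π*(v:ℝ)))⁻¹ * (x^2 * rexp (-(2*(v:ℝ))⁻¹ * x^2)) := by
      intro x
      simp only [gaussianPDFReal, sub_zero]
      rw [show -x^2/(2*(v:ℝ)) = -(2*(v:ℝ))⁻¹ * x^2 by ring]
      ring
    simp_rw [heq]
    rw [integral_const_mul, integral_sq_mul_exp_neg_mul_sq hb]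
    have h1 : π / (2*(v:ℝ))⁻¹ = 2*π*(v:ℝ) := by field_simp
    have h2 : (2 * (2*(v:ℝ))⁻¹) = ((v:ℝ))⁻¹ := by field_simp
    rw [h1, h2]
    have h3 : √(2*π*(v:ℝ)) ≠ 0 := by positivity
    field_simp


lemma combo_facts {Ω : Type*} [MeasurableSpace Ω] {P : Measure Ω} [IsProbabilityMeasure P]
    {L : Ω → ℝ} {v : ℝ≥0} (h : Measure.map L P = gaussianReal 0 v) :
    AEMeasurable L P ∧ Integrable (fun ω => (L ω)^2) P ∧ Integrable (fun ω => rexp (L ω)) P ∧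
      ∫ ω, rexp (L ω) ∂P = rexp ((∫ ω, (L ω)^2 ∂P)/2) := by
  have hL : AEMeasurable L P := by
    by_contra hc
    rw [Measure.map_of_not_aemeasurable hc] at h
    exact (IsProbabilityMeasure.ne_zero (μ := gaussianReal 0 v)) h.symm
  have hsq : Integrable (fun ω => (L ω)^2) P := by
    have h1 := integrable_sq_gaussianReal v
    rw [← h] at h1
    exact (integrable_map_measure (by fun_prop) hL).1 h1
  have hexp : Integrable (fun ω => rexp (L ω)) P := by
    have h1 := integrable_exp_gaussianReal v
    rw [← h] at h1
    exact (integrable_map_measure Real.continuous_exp.measurable.aestronglyMeasurable hL).1 h1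
  have hsqint : ∫ ω, (L ω)^2 ∂P = v := by
    have := integral_map (f := fun x : ℝ => x^2) hL (by fun_prop)
    rw [h, integral_sq_gaussianReal] at this
    exact this.symm
  have hexpint : ∫ ω, rexp (L ω) ∂P = rexp ((∫ ω, (L ω)^2 ∂P)/2) := by
    rw [hsqint]
    have := integral_map (f := fun x : ℝ => rexp x) hL
      Real.continuous_exp.measurable.aestronglyMeasurable
    rw [h, integral_exp_gaussianReal] at this
    exact this.symm
  exact ⟨hL, hsq, hexp, hexpint⟩


lemma key_lemma {Ω : Type*} [MeasurableSpace Ω] (P : Measure Ω) [IsProbabilityMeasure P]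
    (V S : Ω → ℝ)
    (h : ∀ t u : ℝ, ∃ v : ℝ≥0, Measure.map (fun ω => t * V ω + u * S ω) P = gaussianReal 0 v) :
    Integrable (fun ω => (V ω)^2 * rexp (S ω)) P ∧
    ∫ ω, (V ω)^2 * rexp (S ω) ∂P
      = ((∫ ω, (V ω)^2 ∂P) + (∫ ω, V ω * S ω ∂P)^2) * rexp ((∫ ω, (S ω)^2 ∂P)/2) := by
  have hfact : ∀ t u : ℝ, AEMeasurable (fun ω => t*V ω + u*S ω) P ∧
      Integrable (fun ω => (t*V ω + u*S ω)^2) P ∧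
      Integrable (fun ω => rexp (t*V ω + u*S ω)) P ∧
      ∫ ω, rexp (t*V ω + u*S ω) ∂P = rexp ((∫ ω, (t*V ω + u*S ω)^2 ∂P)/2) := by
    intro t u
    obtain ⟨v, hv⟩ := h t u
    exact combo_facts hv
  have hVmeas : AEMeasurable V P := by
    have := (hfact 1 0).1; simpa using this
  have hSmeas : AEMeasurable S P := by
    have := (hfact 0 1).1; simpa using this
  have intV2 : Integrable (fun ω => (V ω)^2) P := by
    have := (hfact 1 0).2.1; simpa using this
  have intS2 : Integrable (fun ω => (S ω)^2) P := by
    have := (hfact 0 1).2.1; simpa using this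
  have intVpS2 : Integrable (fun ω => (V ω + S ω)^2) P := by
    have := (hfact 1 1).2.1; simpa using this
  have intVS : Integrable (fun ω => V ω * S ω) P := by
    have h1 := ((intVpS2.sub intV2).sub intS2).const_mul (1/2 : ℝ)
    refine h1.congr (.of_forall fun ω => ?_)
    simp only [Pi.sub_apply]
    ring
  set a := ∫ ω, (V ω)^2 ∂P with ha
  set b := ∫ ω, V ω * S ω ∂P with hb
  set s2 := ∫ ω, (S ω)^2 ∂P with hs2
  -- the variance of t*V + S
  have hw : ∀ t : ℝ, ∫ ω, (t*V ω + S ω)^2 ∂P = t^2*a + 2*t*b + s2 := by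
    intro t
    have hpt : ∀ ω, (t*V ω + S ω)^2 = (t^2*(V ω)^2 + 2*t*(V ω * S ω)) + (S ω)^2 := by
      intro ω; ring
    simp_rw [hpt]
    have hAB : Integrable (fun ω => t^2*(V ω)^2 + 2*t*(V ω * S ω)) P :=
      (intV2.const_mul (t^2)).add (intVS.const_mul (2*t))
    rw [integral_add hAB intS2,
      integral_add (intV2.const_mul (t^2)) (intVS.const_mul (2*t)),
      integral_const_mul, integral_const_mul]
  -- the mgf-type function
  have hgint : ∀ t : ℝ, Integrable (fun ω => rexp (t*V ω + S ω)) P := by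
    intro t
    have := (hfact t 1).2.2.1; simpa using this
  have hg : ∀ t : ℝ, ∫ ω, rexp (t*V ω + S ω) ∂P = rexp ((t^2*a + 2*t*b + s2)/2) := by
    intro t
    have h1 := (hfact t 1).2.2.2
    simp only [one_mul] at h1
    rw [h1, hw t]
  -- first derivative of ∫ exp (t V + S)
  set g1 : ℝ → ℝ := fun t => ∫ ω, V ω * rexp (t*V ω + S ω) ∂P with hg1def
  have hEmeas : ∀ t : ℝ, AEMeasurable (fun ω => rexp (t*V ω + S ω)) P := by
    intro t
    exact (Real.measurable_exp.comp_aemeasurable ((hVmeas.const_mul t).add hSmeas))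
  have hd1 : ∀ t₀ : ℝ, Integrable (fun ω => V ω * rexp (t₀*V ω + S ω)) P ∧
      HasDerivAt (fun t => ∫ ω, rexp (t*V ω + S ω) ∂P) (g1 t₀) t₀ := by
    intro t₀
    set c : ℝ := |t₀| + 2 with hc
    have intb1 : Integrable (fun ω => rexp (c*V ω + S ω)) P := by
      have := (hfact c 1).2.2.1; simpa using this
    have intb2 : Integrable (fun ω => rexp (-c*V ω + S ω)) P := by
      have := (hfact (-c) 1).2.2.1; simpa using this
    refine hasDerivAt_integral_of_dominated_loc_of_deriv_le (s := Metric.ball t₀ 1)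
      (F := fun t ω => rexp (t*V ω + S ω)) (F' := fun t ω => V ω * rexp (t*V ω + S ω)) (Metric.ball_mem_nhds t₀ one_pos)
      (Filter.Eventually.of_forall fun t => (hEmeas t).aestronglyMeasurable)
      (hgint t₀) ((hVmeas.mul (hEmeas t₀)).aestronglyMeasurable)
      (Filter.Eventually.of_forall fun ω => ?_)
      (intb1.add intb2)
      (Filter.Eventually.of_forall fun ω => ?_)
    · intro t ht
      have habs : |t| ≤ c - 1 := by
        have h1 : |t - t₀| < 1 := by simpa [Real.dist_eq] using ht
        have h2 : |t| ≤ |t₀| + |t - t₀| := by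
          calc |t| = |t₀ + (t - t₀)| := by ring_nf
          _ ≤ |t₀| + |t - t₀| := abs_add_le _ _
        simp only [hc]
        linarith
      have h3 : t * V ω ≤ (c-1) * |V ω| := by
        calc t * V ω ≤ |t * V ω| := le_abs_self _
        _ = |t| * |V ω| := abs_mul _ _
        _ ≤ (c-1) * |V ω| := by gcongr
      calc ‖V ω * rexp (t*V ω + S ω)‖ = |V ω| * rexp (t*V ω + S ω) := by
            rw [norm_mul, Real.norm_eq_abs, Real.norm_eq_abs, abs_of_pos (Real.exp_pos _)]
        _ ≤ rexp |V ω| * rexp ((c-1)*|V ω| + S ω) := by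
            apply mul_le_mul
            · calc |V ω| ≤ |V ω| + 1 := by linarith
                _ ≤ rexp |V ω| := Real.add_one_le_exp _
            · exact Real.exp_le_exp.2 (by linarith)
            · exact (Real.exp_pos _).le
            · exact (Real.exp_pos _).le
        _ = rexp (c*|V ω| + S ω) := by rw [← Real.exp_add]; ring_nf
        _ ≤ rexp (c*V ω + S ω) + rexp (-c*V ω + S ω) := by
            rcases abs_cases (V ω) with ⟨h1, _⟩ | ⟨h1, _⟩
            · rw [h1]
              exact le_add_of_nonneg_right (Real.exp_pos _).le
            · rw [h1, show c * -V ω = -c * V ω by ring]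
              exact le_add_of_nonneg_left (Real.exp_pos _).le
    · intro t _
      have h1 : HasDerivAt (fun s : ℝ => s * V ω + S ω) (V ω) t :=
        (hasDerivAt_mul_const (V ω)).add_const (S ω)
      have h2 := h1.exp
      simpa [mul_comm] using h2
  have hg1 : ∀ t : ℝ, g1 t = (t*a + b) * rexp ((t^2*a + 2*t*b + s2)/2) := by
    intro t
    have hfun : (fun t : ℝ => ∫ ω, rexp (t*V ω + S ω) ∂P)
        = fun t => rexp ((t^2*a + 2*t*b + s2)/2) := funext hg
    have hD : HasDerivAt (fun t : ℝ => rexp ((t^2*a + 2*t*b + s2)/2)) (g1 t) t := by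
      rw [← hfun]; exact (hd1 t).2
    have hD' : HasDerivAt (fun t : ℝ => rexp ((t^2*a + 2*t*b + s2)/2))
        ((t*a + b) * rexp ((t^2*a + 2*t*b + s2)/2)) t := by
      have hq : HasDerivAt (fun t : ℝ => (t^2*a + 2*t*b + s2)/2) (t*a + b) t := by
        have h1 : HasDerivAt (fun t : ℝ => t^2*a + 2*t*b + s2) ((2*t^1)*a + 2*b) t := by
          have hA : HasDerivAt (fun t : ℝ => t^2*a) ((2*t^1)*a) t := by
            have := (hasDerivAt_pow 2 t).mul_const a
            simpa using this
          have hB : HasDerivAt (fun t : ℝ => 2*t*b) (2*b) t := by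
            have := ((hasDerivAt_id t).const_mul (2:ℝ)).mul_const b
            simpa [mul_assoc] using this
          simpa using (hA.add hB).add_const s2
        have h2 := h1.div_const 2
        refine h2.congr_deriv ?_
        ring
      have := hq.exp
      simpa [mul_comm] using this
    exact hD.unique hD'
  -- second derivative at 0
  have hd2 : Integrable (fun ω => (V ω)^2 * rexp (0*V ω + S ω)) P ∧
      HasDerivAt g1 (∫ ω, (V ω)^2 * rexp (0*V ω + S ω) ∂P) 0 := by
    have intb1 : Integrable (fun ω => rexp (3*V ω + S ω)) P := by
      have := (hfact 3 1).2.2.1; simpa using this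
    have intb2 : Integrable (fun ω => rexp (-3*V ω + S ω)) P := by
      have := (hfact (-3) 1).2.2.1; simpa using this
    refine hasDerivAt_integral_of_dominated_loc_of_deriv_le (s := Metric.ball (0:ℝ) 1)
      (F := fun t ω => V ω * rexp (t*V ω + S ω))
      (F' := fun t ω => (V ω)^2 * rexp (t*V ω + S ω)) (Metric.ball_mem_nhds (0:ℝ) one_pos)
      (Filter.Eventually.of_forall fun t => (hVmeas.mul (hEmeas t)).aestronglyMeasurable)
      (hd1 0).1 ((hVmeas.pow_const 2).mul (hEmeas 0)).aestronglyMeasurable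
      (Filter.Eventually.of_forall fun ω => ?_)
      (intb1.add intb2)
      (Filter.Eventually.of_forall fun ω => ?_)
    · intro t ht
      have habs : |t| ≤ 1 := by
        have h1 : |t - 0| < 1 := by simpa [Real.dist_eq] using ht
        simp only [sub_zero] at h1
        linarith
      have h3 : t * V ω ≤ |V ω| := by
        calc t * V ω ≤ |t * V ω| := le_abs_self _
        _ = |t| * |V ω| := abs_mul _ _
        _ ≤ 1 * |V ω| := by gcongr
        _ = |V ω| := one_mul _
      calc ‖(V ω)^2 * rexp (t*V ω + S ω)‖ = (V ω)^2 * rexp (t*V ω + S ω) := by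
            rw [Real.norm_eq_abs, abs_of_nonneg (by positivity)]
        _ ≤ rexp (2*|V ω|) * rexp (|V ω| + S ω) := by
            apply mul_le_mul
            · have hV : |V ω| ≤ rexp |V ω| := by
                calc |V ω| ≤ |V ω| + 1 := by linarith
                  _ ≤ rexp |V ω| := Real.add_one_le_exp _
              calc (V ω)^2 = |V ω|^2 := (sq_abs _).symm
                _ ≤ (rexp |V ω|)^2 := pow_le_pow_left₀ (abs_nonneg _) hV 2
                _ = rexp (2*|V ω|) := by
                    rw [← Real.exp_nat_mul]
                    norm_num
            · exact Real.exp_le_exp.2 (by linarith)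
            · exact (Real.exp_pos _).le
            · exact (Real.exp_pos _).le
        _ = rexp (3*|V ω| + S ω) := by rw [← Real.exp_add]; ring_nf
        _ ≤ rexp (3*V ω + S ω) + rexp (-3*V ω + S ω) := by
            rcases abs_cases (V ω) with ⟨h1, _⟩ | ⟨h1, _⟩
            · rw [h1]
              exact le_add_of_nonneg_right (Real.exp_pos _).le
            · rw [h1, show (3:ℝ) * -V ω = -3 * V ω by ring]
              exact le_add_of_nonneg_left (Real.exp_pos _).le
    · intro t _
      have h1 : HasDerivAt (fun s : ℝ => s * V ω + S ω) (V ω) t :=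
        (hasDerivAt_mul_const (V ω)).add_const (S ω)
      have h2 := (h1.exp).const_mul (V ω)
      have h3 : V ω * (rexp (t * V ω + S ω) * V ω) = (V ω)^2 * rexp (t * V ω + S ω) := by ring
      simpa [h3] using h2
  -- compute the second derivative of the explicit function at 0
  have hfin : ∫ ω, (V ω)^2 * rexp (0*V ω + S ω) ∂P = (a + b^2) * rexp (s2/2) := by
    have hfun1 : g1 = fun t => (t*a + b) * rexp ((t^2*a + 2*t*b + s2)/2) := funext hg1
    have hD : HasDerivAt (fun t : ℝ => (t*a + b) * rexp ((t^2*a + 2*t*b + s2)/2))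
        (∫ ω, (V ω)^2 * rexp (0*V ω + S ω) ∂P) 0 := by
      rw [← hfun1]; exact hd2.2
    have hD' : HasDerivAt (fun t : ℝ => (t*a + b) * rexp ((t^2*a + 2*t*b + s2)/2))
        (a * rexp ((0^2*a + 2*0*b + s2)/2)
          + (0*a + b) * ((0*a + b) * rexp ((0^2*a + 2*0*b + s2)/2))) 0 := by
      have hlin : HasDerivAt (fun t : ℝ => t*a + b) a 0 :=
        (hasDerivAt_mul_const a).add_const b
      have hq : HasDerivAt (fun t : ℝ => rexp ((t^2*a + 2*t*b + s2)/2))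
          ((0*a + b) * rexp ((0^2*a + 2*0*b + s2)/2)) 0 := by
        have hq0 : HasDerivAt (fun t : ℝ => (t^2*a + 2*t*b + s2)/2) (0*a + b) 0 := by
          have h1 : HasDerivAt (fun t : ℝ => t^2*a + 2*t*b + s2) ((2*(0:ℝ)^1)*a + 2*b) 0 := by
            have hA : HasDerivAt (fun t : ℝ => t^2*a) ((2*(0:ℝ)^1)*a) 0 := by
              have := (hasDerivAt_pow 2 (0:ℝ)).mul_const a
              simpa using this
            have hB : HasDerivAt (fun t : ℝ => 2*t*b) (2*b) (0:ℝ) := by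
              have := ((hasDerivAt_id (0:ℝ)).const_mul (2:ℝ)).mul_const b
              simpa [mul_assoc] using this
            simpa using (hA.add hB).add_const s2
          have h2 := h1.div_const 2
          refine h2.congr_deriv ?_
          ring
        have := hq0.exp
        simpa [mul_comm] using this
      exact hlin.mul hq
    have := hD.unique hD'
    rw [this]
    norm_num
    ring
  have hsimp : (fun ω => (V ω)^2 * rexp (0*V ω + S ω)) = fun ω => (V ω)^2 * rexp (S ω) := by
    funext ω; norm_num
  constructor
  · rw [← hsimp]; exact hd2.1
  · rw [← hsimp, hfin]

end Auxiliary

/-- `(X, Y, W, Z)` is a centered (jointly) Gaussian vector: every linear combination of its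
coordinates is a centered real Gaussian. -/
def IsCenteredGaussianQuadruple {Ω : Type*} [MeasurableSpace Ω] (P : Measure Ω)
    (X Y W Z : Ω → ℝ) : Prop :=
  ∀ a b c d : ℝ, ∃ v : ℝ≥0,
    Measure.map (fun ω => a * X ω + b * Y ω + c * W ω + d * Z ω) P = gaussianReal 0 v

/-- Gaussian identity: for a centered Gaussian vector `(X, Y, W, Z)`,
`E(WZ e^{X−E(X²)/2} e^{Y−E(Y²)/2}) = (E(WZ) + (E(WX)+E(WY))(E(ZX)+E(ZY))) e^{E(XY)}`. -/
theorem statement16 {Ω : Type*} [MeasurableSpace Ω] (P : Measure Ω) [IsProbabilityMeasure P]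
    (X Y W Z : Ω → ℝ) (hGauss : IsCenteredGaussianQuadruple P X Y W Z) :
    ∫ ω, W ω * Z ω * Real.exp (X ω - (∫ ω', (X ω') ^ 2 ∂P) / 2) *
        Real.exp (Y ω - (∫ ω', (Y ω') ^ 2 ∂P) / 2) ∂P =
      ((∫ ω, W ω * Z ω ∂P) +
          ((∫ ω, W ω * X ω ∂P) + ∫ ω, W ω * Y ω ∂P) *
            ((∫ ω, Z ω * X ω ∂P) + ∫ ω, Z ω * Y ω ∂P)) *
        Real.exp (∫ ω, X ω * Y ω ∂P) := by
  classical
  -- square-integrability of all linear combinations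
  have hsq : ∀ a b c d : ℝ,
      Integrable (fun ω => (a*X ω + b*Y ω + c*W ω + d*Z ω)^2) P := by
    intro a b c d
    obtain ⟨v, hv⟩ := hGauss a b c d
    exact (combo_facts hv).2.1
  -- integrability of products of linear combinations
  have hmul : ∀ a b c d a' b' c' d' : ℝ,
      Integrable (fun ω => (a*X ω + b*Y ω + c*W ω + d*Z ω)
        * (a'*X ω + b'*Y ω + c'*W ω + d'*Z ω)) P := by
    intro a b c d a' b' c' d'
    have h1 := hsq (a+a') (b+b') (c+c') (d+d')
    have h2 := (((h1.sub (hsq a b c d)).sub (hsq a' b' c' d')).const_mul (1/2 : ℝ))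
    refine h2.congr (Filter.Eventually.of_forall fun ω => ?_)
    simp only [Pi.sub_apply]
    ring
  have intXY : Integrable (fun ω => X ω * Y ω) P := by
    have := hmul 1 0 0 0 0 1 0 0; simpa using this
  have intWZ : Integrable (fun ω => W ω * Z ω) P := by
    have := hmul 0 0 1 0 0 0 0 1; simpa using this
  have intWX : Integrable (fun ω => W ω * X ω) P := by
    have := hmul 0 0 1 0 1 0 0 0; simpa using this
  have intWY : Integrable (fun ω => W ω * Y ω) P := by
    have := hmul 0 0 1 0 0 1 0 0; simpa using this
  have intZX : Integrable (fun ω => Z ω * X ω) P := by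
    have := hmul 0 0 0 1 1 0 0 0; simpa using this
  have intZY : Integrable (fun ω => Z ω * Y ω) P := by
    have := hmul 0 0 0 1 0 1 0 0; simpa using this
  have intX2 : Integrable (fun ω => (X ω)^2) P := by
    have := hsq 1 0 0 0; simpa using this
  have intY2 : Integrable (fun ω => (Y ω)^2) P := by
    have := hsq 0 1 0 0; simpa using this
  have intW2 : Integrable (fun ω => (W ω)^2) P := by
    have := hsq 0 0 1 0; simpa using this
  have intZ2 : Integrable (fun ω => (Z ω)^2) P := by
    have := hsq 0 0 0 1; simpa using this
  -- the joint Gaussian hypotheses for the key lemma, with S = X + Y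
  have hKW : ∀ t u : ℝ, ∃ v : ℝ≥0,
      Measure.map (fun ω => t * W ω + u * (X ω + Y ω)) P = gaussianReal 0 v := by
    intro t u
    obtain ⟨v, hv⟩ := hGauss u u t 0
    refine ⟨v, ?_⟩
    rw [← hv]
    congr 1
    funext ω
    ring
  have hKZ : ∀ t u : ℝ, ∃ v : ℝ≥0,
      Measure.map (fun ω => t * Z ω + u * (X ω + Y ω)) P = gaussianReal 0 v := by
    intro t u
    obtain ⟨v, hv⟩ := hGauss u u 0 t
    refine ⟨v, ?_⟩
    rw [← hv]
    congr 1
    funext ω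
    ring
  have hKWZ : ∀ t u : ℝ, ∃ v : ℝ≥0,
      Measure.map (fun ω => t * (W ω + Z ω) + u * (X ω + Y ω)) P = gaussianReal 0 v := by
    intro t u
    obtain ⟨v, hv⟩ := hGauss u u t t
    refine ⟨v, ?_⟩
    rw [← hv]
    congr 1
    funext ω
    ring
  have kW := key_lemma P W (fun ω => X ω + Y ω) hKW
  have kZ := key_lemma P Z (fun ω => X ω + Y ω) hKZ
  have kWZ := key_lemma P (fun ω => W ω + Z ω) (fun ω => X ω + Y ω) hKWZ
  beta_reduce at kW kZ kWZ
  -- abbreviations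
  set A := ∫ ω, (X ω)^2 ∂P with hA
  set B := ∫ ω, (Y ω)^2 ∂P with hB
  set cXY := ∫ ω, X ω * Y ω ∂P with hcXY
  set cWZ := ∫ ω, W ω * Z ω ∂P with hcWZ
  -- expansions of the integrals appearing in the key lemma conclusions
  have hS2 : ∫ ω, (X ω + Y ω)^2 ∂P = A + 2*cXY + B := by
    have hpt : ∀ ω, (X ω + Y ω)^2 = ((X ω)^2 + 2*(X ω * Y ω)) + (Y ω)^2 := fun ω => by ring
    simp_rw [hpt]
    have h1 : Integrable (fun ω => (X ω)^2 + 2*(X ω * Y ω)) P :=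
      intX2.add (intXY.const_mul 2)
    rw [integral_add h1 intY2, integral_add intX2 (intXY.const_mul 2), integral_const_mul]
  have hbW : ∫ ω, W ω * (X ω + Y ω) ∂P = (∫ ω, W ω * X ω ∂P) + ∫ ω, W ω * Y ω ∂P := by
    have hpt : ∀ ω, W ω * (X ω + Y ω) = W ω * X ω + W ω * Y ω := fun ω => by ring
    simp_rw [hpt]
    rw [integral_add intWX intWY]
  have hbZ : ∫ ω, Z ω * (X ω + Y ω) ∂P = (∫ ω, Z ω * X ω ∂P) + ∫ ω, Z ω * Y ω ∂P := by
    have hpt : ∀ ω, Z ω * (X ω + Y ω) = Z ω * X ω + Z ω * Y ω := fun ω => by ring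
    simp_rw [hpt]
    rw [integral_add intZX intZY]
  have hbWZ : ∫ ω, (W ω + Z ω) * (X ω + Y ω) ∂P
      = (∫ ω, W ω * (X ω + Y ω) ∂P) + ∫ ω, Z ω * (X ω + Y ω) ∂P := by
    have hpt : ∀ ω, (W ω + Z ω) * (X ω + Y ω)
        = W ω * (X ω + Y ω) + Z ω * (X ω + Y ω) := fun ω => by ring
    simp_rw [hpt]
    have intWS : Integrable (fun ω => W ω * (X ω + Y ω)) P := by
      refine (intWX.add intWY).congr (Filter.Eventually.of_forall fun ω => ?_)
      simp only [Pi.add_apply]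
      ring
    have intZS : Integrable (fun ω => Z ω * (X ω + Y ω)) P := by
      refine (intZX.add intZY).congr (Filter.Eventually.of_forall fun ω => ?_)
      simp only [Pi.add_apply]
      ring
    rw [integral_add intWS intZS]
  have haWZ : ∫ ω, (W ω + Z ω)^2 ∂P = (∫ ω, (W ω)^2 ∂P) + 2*cWZ + ∫ ω, (Z ω)^2 ∂P := by
    have hpt : ∀ ω, (W ω + Z ω)^2 = ((W ω)^2 + 2*(W ω * Z ω)) + (Z ω)^2 := fun ω => by ring
    simp_rw [hpt]
    have h1 : Integrable (fun ω => (W ω)^2 + 2*(W ω * Z ω)) P :=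
      intW2.add (intWZ.const_mul 2)
    rw [integral_add h1 intZ2, integral_add intW2 (intWZ.const_mul 2), integral_const_mul]
  -- the central computation : ∫ W Z e^{X+Y}
  set bW := (∫ ω, W ω * X ω ∂P) + ∫ ω, W ω * Y ω ∂P with hbWdef
  set bZ := (∫ ω, Z ω * X ω ∂P) + ∫ ω, Z ω * Y ω ∂P with hbZdef
  set E := Real.exp ((A + 2*cXY + B)/2) with hE
  have kW2 : ∫ ω, (W ω)^2 * Real.exp (X ω + Y ω) ∂P = ((∫ ω, (W ω)^2 ∂P) + bW^2) * E := by
    rw [kW.2, hS2, hbW]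
  have kZ2 : ∫ ω, (Z ω)^2 * Real.exp (X ω + Y ω) ∂P = ((∫ ω, (Z ω)^2 ∂P) + bZ^2) * E := by
    rw [kZ.2, hS2, hbZ]
  have kWZ2 : ∫ ω, (W ω + Z ω)^2 * Real.exp (X ω + Y ω) ∂P
      = ((∫ ω, (W ω)^2 ∂P) + 2*cWZ + (∫ ω, (Z ω)^2 ∂P) + (bW + bZ)^2) * E := by
    rw [kWZ.2, hS2, haWZ, hbWZ, hbW, hbZ]
  have intC : Integrable (fun ω => W ω * Z ω * Real.exp (X ω + Y ω)) P := by
    have h2 := ((kWZ.1.sub kW.1).sub kZ.1).const_mul (1/2 : ℝ)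
    refine h2.congr (Filter.Eventually.of_forall fun ω => ?_)
    simp only [Pi.sub_apply]
    ring
  have hcent : ∫ ω, W ω * Z ω * Real.exp (X ω + Y ω) ∂P = (cWZ + bW * bZ) * E := by
    have hpt : (fun ω => W ω * Z ω * Real.exp (X ω + Y ω))
        = fun ω => ((W ω + Z ω)^2 * Real.exp (X ω + Y ω)
            - (W ω)^2 * Real.exp (X ω + Y ω)
            - (Z ω)^2 * Real.exp (X ω + Y ω)) * (1/2) := by
      funext ω
      ring
    rw [hpt]
    have i1 : Integrable (fun ω => (W ω + Z ω)^2 * Real.exp (X ω + Y ω)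
        - (W ω)^2 * Real.exp (X ω + Y ω)) P := kWZ.1.sub kW.1
    rw [integral_mul_const, integral_sub i1 kZ.1, integral_sub kWZ.1 kW.1,
      kW2, kZ2, kWZ2]
    ring
  -- rewrite the original integrand
  have hpt2 : (fun ω => W ω * Z ω * Real.exp (X ω - A/2) * Real.exp (Y ω - B/2))
      = fun ω => W ω * Z ω * Real.exp (X ω + Y ω) * Real.exp (-(A+B)/2) := by
    funext ω
    rw [show W ω * Z ω * Real.exp (X ω - A/2) * Real.exp (Y ω - B/2)
        = W ω * Z ω * (Real.exp (X ω - A/2) * Real.exp (Y ω - B/2)) by ring,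
      ← Real.exp_add,
      show W ω * Z ω * Real.exp (X ω + Y ω) * Real.exp (-(A+B)/2)
        = W ω * Z ω * (Real.exp (X ω + Y ω) * Real.exp (-(A+B)/2)) by ring,
      ← Real.exp_add]
    congr 2
    ring
  rw [hpt2, integral_mul_const, hcent, hE]
  rw [mul_assoc, ← Real.exp_add, show (A + 2*cXY + B)/2 + -(A+B)/2 = cXY by ring]
end
end
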